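/- arXiv:1806.05989 — 4 statements merged into one kernel-verified Lean document; each statement's English description precedes it below -/
import Mathlib

section
/- For every irrational α and every index n ≥ 1, max(λ_{n−1}(α), λ_n(α)) ≥ K, where K = √((√5+1)/2) − 1. -/
/-- Complete quotients of the continued fraction expansion of α. -/
noncomputable def cq (α : ℝ) : ℕ → ℝ
  | 0 => α
  | n + 1 => (Int.fract (cq α n))⁻¹

/-- Denominators q_n of the continued fraction convergents of α. -/
noncomputable def qden (α : ℝ) : ℕ → ℤ
  | 0 => 1
  | 1 => ⌊cq α 1⌋
  | n + 2 => ⌊cq α (n + 2)⌋ * qden α (n + 1) + qden α n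

/-- Numerators p_n of the continued fraction convergents of α. -/
noncomputable def pnum (α : ℝ) : ℕ → ℤ
  | 0 => ⌊α⌋
  | 1 => ⌊cq α 1⌋ * ⌊α⌋ + 1
  | n + 2 => ⌊cq α (n + 2)⌋ * pnum α (n + 1) + pnum α n

/-- ξ_n = |q_n α − p_n|. -/
noncomputable def xi (α : ℝ) (n : ℕ) : ℝ := |(qden α n : ℝ) * α - (pnum α n : ℝ)|

/-- λ_n(α) = √(α_{n+1}) − 1. -/
noncomputable def lam (α : ℝ) (n : ℕ) : ℝ := Real.sqrt (cq α (n + 1)) - 1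


/-!
A complete quotient satisfies `α_n = ⌊α_n⌋ + 1/α_{n+1}` with `α_n > 1` for `n ≥ 1`, so
`α_n ≥ 1 + 1/α_{n+1}`. If `α_{n+1} < τ` then `1/α_{n+1} > 1/τ = τ - 1`, forcing `α_n > τ`;
hence `max(α_n, α_{n+1}) ≥ τ`, and taking `√· - 1` of both sides gives the bound on `λ`.
-/

open Real goldenRatio

lemma goldenRatio_le_max_of_one_add_inv_le {x y : ℝ} (hy : 0 < y) (h : 1 + y⁻¹ ≤ x) :
    φ ≤ max x y := by
  rcases le_or_gt φ y with hφy | hyφ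
  · exact le_max_of_le_right hφy
  · have hinv : φ⁻¹ < y⁻¹ := inv_strictAnti₀ hy hyφ
    have hφ : 1 + φ⁻¹ = φ := by
      rw [inv_goldenRatio, ← one_sub_goldenRatio]; ring
    exact le_max_of_le_left (by linarith)

lemma irrational_cq {α : ℝ} (hα : Irrational α) : ∀ n, Irrational (cq α n)
  | 0 => hα
  | n + 1 => ((irrational_cq hα n).sub_intCast ⌊cq α n⌋).inv

lemma one_lt_cq_succ {α : ℝ} (hα : Irrational α) (n : ℕ) : 1 < cq α (n + 1) := by
  have hfract : Irrational (Int.fract (cq α n)) := (irrational_cq hα n).sub_intCast _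
  have hpos : 0 < Int.fract (cq α n) :=
    (Int.fract_nonneg _).lt_of_ne (by simpa using (hfract.ne_int 0).symm)
  exact (one_lt_inv₀ hpos).mpr (Int.fract_lt_one _)

lemma cq_eq_floor_add_inv_cq_succ (α : ℝ) (n : ℕ) :
    cq α n = ⌊cq α n⌋ + (cq α (n + 1))⁻¹ := by
  rw [cq, inv_inv, add_comm, Int.fract_add_floor]

lemma one_add_inv_cq_succ_le {α : ℝ} (hα : Irrational α) (n : ℕ) :
    1 + (cq α (n + 2))⁻¹ ≤ cq α (n + 1) := by
  have hfloor : (1 : ℝ) ≤ ⌊cq α (n + 1)⌋ := by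
    exact_mod_cast Int.le_floor.mpr (by exact_mod_cast (one_lt_cq_succ hα n).le)
  have := cq_eq_floor_add_inv_cq_succ α (n + 1)
  linarith

lemma goldenRatio_le_max_cq {α : ℝ} (hα : Irrational α) (n : ℕ) :
    φ ≤ max (cq α (n + 1)) (cq α (n + 2)) :=
  goldenRatio_le_max_of_one_add_inv_le (zero_lt_one.trans (one_lt_cq_succ hα _))
    (one_add_inv_cq_succ_le hα n)

/-- Hilfssatz 2 (ii): max(λ_{n−1}(α), λ_n(α)) ≥ K where K = √((√5+1)/2) − 1. -/
theorem hilfssatz2_ii (α : ℝ) (hα : Irrational α) (n : ℕ) (hn : 1 ≤ n) :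
    max (lam α (n - 1)) (lam α n) ≥ Real.sqrt ((Real.sqrt 5 + 1) / 2) - 1 := by
  obtain ⟨m, rfl⟩ := Nat.exists_eq_add_of_le' hn
  have hmono : Monotone fun t : ℝ => √t - 1 := fun _ _ h =>
    sub_le_sub_right (Real.sqrt_le_sqrt h) 1
  have hφ : (√5 + 1) / 2 = φ := by rw [goldenRatio, add_comm]
  rw [ge_iff_le, hφ, Nat.add_sub_cancel, lam, lam, ← hmono.map_max]
  exact hmono (goldenRatio_le_max_cq hα m)
end

section
/- Main theorem: Let α and β be irrational numbers with α + β ∉ ℤ and α − β ∉ ℤ. Then for every T ≥ 1 there exists t ≥ T such that |ψ_α(t) − ψ_β(t)| ≥ K · min(ψ_α(t), ψ_β(t)), where K = √((√5+1)/2) − 1. -/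
/-- Distance from a real number to the nearest integer. -/
noncomputable def dni (x : ℝ) : ℝ := |x - round x|

/-- The irrationality measure function ψ_ξ(t) = min_{1 ≤ q ≤ t, q ∈ ℤ} ‖qξ‖. -/
noncomputable def psi (ξ t : ℝ) : ℝ :=
  sInf {v : ℝ | ∃ q : ℤ, 1 ≤ q ∧ (q : ℝ) ≤ t ∧ v = dni ((q : ℝ) * ξ)}

/-!
Suppose that from some point on each of `ψ_α`, `ψ_β` is less than `c = √φ` times the other.
If `Q < Q' < Q''` are consecutive best approximation denominators of `α` and neither `Q'` nor
`Q''` is one of `β`, then `ψ_β` does not jump at `Q'` and `Q''`, whence `‖Qα‖ < φ ‖Q'α‖` and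
`‖Q'α‖ < φ ‖Q''α‖`; with `‖Qα‖ ≥ ‖Q'α‖ + ‖Q''α‖` this contradicts `φ (φ - 1) = 1`.
So `α` and `β` have arbitrarily large common best approximations `Q`, and the next common one `R`
is at most two steps after `Q` for both; using the same bound and `φ < 2` in the two-step case,
`Q p_ξ(R) - R p_ξ(Q) = ±1` for `ξ = α, β`, where `p_ξ(q) = round (qξ)`. Comparing the two
determinants, `Q` divides `p_α(Q) ∓ p_β(Q)`, so `‖α ∓ β‖ ≤ 1/Q` for one of the signs, and
letting `Q → ∞` puts `α - β` or `α + β` in `ℤ`.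
-/

open Real

namespace BestApprox

variable {ξ : ℝ}

lemma mul_sub_one_le_one_of_le_goldenRatio {x : ℝ} (h0 : 0 ≤ x) (h : x ≤ goldenRatio) :
    x * (x - 1) ≤ 1 := by
  -- `x² - x - 1 = (x - φ) (x - 1 + φ)`
  nlinarith [mul_nonpos_of_nonpos_of_nonneg (sub_nonpos.2 h)
    (by linarith [one_lt_goldenRatio] : 0 ≤ x - 1 + goldenRatio), goldenRatio_sq]

lemma lt_mul_and_lt_mul_of_abs_sub_lt {x y c : ℝ} (hc : 1 ≤ c)
    (h : |x - y| < (c - 1) * min x y) : x < c * y ∧ y < c * x := by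
  have hy : (c - 1) * min x y ≤ (c - 1) * y :=
    mul_le_mul_of_nonneg_left (min_le_right _ _) (by linarith)
  have hx : (c - 1) * min x y ≤ (c - 1) * x :=
    mul_le_mul_of_nonneg_left (min_le_left _ _) (by linarith)
  constructor <;> linarith [le_abs_self (x - y), neg_abs_le (x - y)]

lemma dni_nonneg (x : ℝ) : 0 ≤ dni x := abs_nonneg _

lemma dni_le_half (x : ℝ) : dni x ≤ 1 / 2 := abs_sub_round x

lemma dni_pos {x : ℝ} (hx : ∀ m : ℤ, x ≠ m) : 0 < dni x :=
  abs_pos.2 (sub_ne_zero.2 (hx _))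

lemma dni_intCast_mul_pos (hξ : Irrational ξ) {q : ℤ} (hq : q ≠ 0) : 0 < dni (q * ξ) :=
  dni_pos (hξ.intCast_mul hq).ne_int

noncomputable def err (ξ : ℝ) (q : ℤ) : ℝ := q * ξ - round ((q : ℝ) * ξ)

lemma abs_err (ξ : ℝ) (q : ℤ) : |err ξ q| = dni (q * ξ) := rfl

lemma err_ne_zero (hξ : Irrational ξ) {q : ℤ} (hq : q ≠ 0) : err ξ q ≠ 0 :=
  abs_pos.1 (dni_intCast_mul_pos hξ hq)

noncomputable def det (ξ : ℝ) (q q' : ℤ) : ℤ := q * round ((q' : ℝ) * ξ) - q' * round ((q : ℝ) * ξ)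

lemma det_cast (ξ : ℝ) (q q' : ℤ) : (det ξ q q' : ℝ) = q' * err ξ q - q * err ξ q' := by
  unfold det err
  push_cast
  ring

lemma det_swap (ξ : ℝ) (q q' : ℤ) : det ξ q' q = -det ξ q q' := by
  unfold det
  ring

lemma det_mul (ξ : ℝ) (q q' r : ℤ) : det ξ q q' * r = det ξ q r * q' + det ξ r q' * q := by
  unfold det
  ring

lemma det_mul_err (ξ : ℝ) (q q' r : ℤ) :
    (det ξ q q' : ℝ) * err ξ r = det ξ q r * err ξ q' + det ξ r q' * err ξ q := by
  simp only [det_cast]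
  ring

lemma isCoprime_of_isUnit_det {q q' : ℤ} (h : IsUnit (det ξ q q')) : IsCoprime q q' := by
  have hdet : det ξ q q' = q * round ((q' : ℝ) * ξ) - q' * round ((q : ℝ) * ξ) := rfl
  exact ⟨det ξ q q' * round ((q' : ℝ) * ξ), -(det ξ q q' * round ((q : ℝ) * ξ)), by
    linear_combination (-det ξ q q') * hdet + Int.isUnit_mul_self h⟩

/-- Cramer's rule in the basis `(Q, round (Qξ))`, `(Q', round (Q'ξ))` of `ℤ²`. -/
lemma exists_eq_add_mul_of_isUnit_det {Q Q' Q'' : ℤ} (h₁ : IsUnit (det ξ Q Q'))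
    (h₂ : IsUnit (det ξ Q' Q'')) :
    ∃ a b : ℤ, (b = 1 ∨ b = -1) ∧ Q'' = a * Q' + b * Q ∧
      err ξ Q'' = a * err ξ Q' + b * err ξ Q := by
  set D := det ξ Q Q'
  have hD : D * D = 1 := Int.isUnit_mul_self h₁
  have hDℝ : (D : ℝ) * D = 1 := by exact_mod_cast hD
  refine ⟨det ξ Q Q'' * D, det ξ Q'' Q' * D, ?_, ?_, ?_⟩
  · rw [← Int.isUnit_iff, det_swap]
    exact h₂.neg.mul h₁
  · linear_combination D * det_mul ξ Q Q' Q'' - Q'' * hD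
  · push_cast
    linear_combination (D : ℝ) * det_mul_err ξ Q Q' Q'' - err ξ Q'' * hDℝ

lemma dni_sub_intCast_mul_le {α β : ℝ} {Q R s : ℤ} (hQ : 0 < Q) (hcop : IsCoprime Q R)
    (hdet : det α Q R = s * det β Q R) :
    dni (α - s * β) ≤ |err α Q - s * err β Q| / Q := by
  obtain ⟨κ, hκ⟩ : Q ∣ round (Q * α) - s * round (Q * β) := by
    refine hcop.dvd_of_dvd_mul_left ⟨round (R * α) - s * round (R * β), ?_⟩
    unfold det at hdet
    linear_combination -hdet
  have hκℝ : (round (Q * α) : ℝ) - s * round (Q * β) = Q * κ := by exact_mod_cast hκ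
  have hQℝ : (0 : ℝ) < Q := by exact_mod_cast hQ
  have heq : α - s * β - κ = (err α Q - s * err β Q) / Q := by
    rw [eq_div_iff hQℝ.ne']
    unfold err
    linear_combination hκℝ
  calc dni (α - s * β) ≤ |α - s * β - κ| := round_le _ _
    _ = |err α Q - s * err β Q| / Q := by rw [heq, abs_div, abs_of_pos hQℝ]

lemma dni_sub_or_dni_add_le {α β : ℝ} {Q R : ℤ} (hQ : 0 < Q) (hα : IsUnit (det α Q R))
    (hβ : IsUnit (det β Q R)) : dni (α - β) ≤ 1 / Q ∨ dni (α + β) ≤ 1 / Q := by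
  have key := dni_sub_intCast_mul_le (α := α) (β := β) hQ (isCoprime_of_isUnit_det hα)
    (s := det α Q R * det β Q R) (by linear_combination (-det α Q R) * Int.isUnit_mul_self hβ)
  have hsum : |err α Q| + |err β Q| ≤ 1 := by
    rw [abs_err, abs_err]
    linarith [dni_le_half (Q * α), dni_le_half (Q * β)]
  have hQℝ : (0 : ℝ) < Q := by exact_mod_cast hQ
  rcases Int.isUnit_iff.1 (hα.mul hβ) with hs | hs <;> rw [hs] at key <;> push_cast at key
  · left
    calc dni (α - β) ≤ |err α Q - err β Q| / Q := by simpa using key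
      _ ≤ 1 / Q := by gcongr; linarith [abs_sub (err α Q) (err β Q)]
  · right
    calc dni (α + β) ≤ |err α Q + err β Q| / Q := by simpa using key
      _ ≤ 1 / Q := by gcongr; linarith [abs_add_le (err α Q) (err β Q)]

lemma psi_intCast_eq_inf' (ξ : ℝ) {N : ℤ} (hN : 1 ≤ N) :
    psi ξ N = (Finset.Icc 1 N).inf' (Finset.nonempty_Icc.2 hN)
      (fun q : ℤ => dni (q * ξ)) := by
  rw [Finset.inf'_eq_csInf_image, psi]
  congr 1
  ext v
  simp [eq_comm, and_assoc]

lemma psi_le_dni {N q : ℤ} (h1 : 1 ≤ q) (h2 : q ≤ N) : psi ξ N ≤ dni (q * ξ) := by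
  rw [psi_intCast_eq_inf' ξ (h1.trans h2)]
  exact Finset.inf'_le _ (Finset.mem_Icc.2 ⟨h1, h2⟩)

lemma exists_dni_eq_psi (ξ : ℝ) {N : ℤ} (hN : 1 ≤ N) :
    ∃ q : ℤ, 1 ≤ q ∧ q ≤ N ∧ dni (q * ξ) = psi ξ N := by
  obtain ⟨q, hq, h⟩ := Finset.exists_mem_eq_inf' (Finset.nonempty_Icc.2 hN)
    (fun q : ℤ => dni (q * ξ))
  rw [Finset.mem_Icc] at hq
  exact ⟨q, hq.1, hq.2, by rw [psi_intCast_eq_inf' ξ hN, h]⟩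

lemma psi_nonneg (ξ t : ℝ) : 0 ≤ psi ξ t :=
  Real.sInf_nonneg fun _ ⟨_, _, _, hv⟩ => hv ▸ dni_nonneg _

lemma psi_pos (hξ : Irrational ξ) {N : ℤ} (hN : 1 ≤ N) : 0 < psi ξ N := by
  obtain ⟨q, hq, -, h⟩ := exists_dni_eq_psi ξ hN
  exact h ▸ dni_intCast_mul_pos hξ (by omega)

lemma psi_le_of_le {N N' : ℤ} (hN : 1 ≤ N) (h : N ≤ N') : psi ξ N' ≤ psi ξ N := by
  obtain ⟨q, hq, hqN, hψ⟩ := exists_dni_eq_psi ξ hN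
  exact hψ ▸ psi_le_dni hq (hqN.trans h)

/-- Dirichlet's approximation theorem. -/
lemma psi_le_inv (ξ : ℝ) {N : ℤ} (hN : 1 ≤ N) : psi ξ N ≤ 1 / (N + 1) := by
  lift N to ℕ using (by omega)
  obtain ⟨j, k, hk, hkN, hjk⟩ := Real.exists_int_int_abs_mul_sub_le ξ (n := N) (by omega)
  calc psi ξ (N : ℤ) ≤ dni (k * ξ) := psi_le_dni hk hkN
    _ ≤ |k * ξ - j| := round_le _ _
    _ ≤ 1 / (((N : ℤ) : ℝ) + 1) := hjk.trans_eq (by push_cast; rfl)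

/-- Best approximation denominators of the second kind. -/
structure IsBestApprox (ξ : ℝ) (Q : ℤ) : Prop where
  one_le : 1 ≤ Q
  dni_lt : ∀ q : ℤ, 1 ≤ q → q < Q → dni (Q * ξ) < dni (q * ξ)

structure IsNextBestApprox (ξ : ℝ) (Q Q' : ℤ) : Prop where
  left : IsBestApprox ξ Q
  right : IsBestApprox ξ Q'
  lt : Q < Q'
  dni_le_of_lt_of_lt : ∀ q : ℤ, Q < q → q < Q' → dni (Q * ξ) ≤ dni (q * ξ)

variable {Q Q' Q'' N : ℤ}

lemma IsBestApprox.psi_eq (h : IsBestApprox ξ Q) : psi ξ Q = dni (Q * ξ) := by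
  obtain ⟨q, hq, hqQ, hψ⟩ := exists_dni_eq_psi ξ h.one_le
  refine le_antisymm (psi_le_dni h.one_le le_rfl) (hψ ▸ ?_)
  rcases hqQ.lt_or_eq with hlt | rfl
  · exact (h.dni_lt q hq hlt).le
  · exact le_rfl

lemma psi_eq_psi_sub_one (h : ¬ IsBestApprox ξ N) (hN : 2 ≤ N) :
    psi ξ N = psi ξ (N - 1 : ℤ) := by
  obtain ⟨q, hq, hqN, hle⟩ : ∃ q : ℤ, 1 ≤ q ∧ q < N ∧ dni (q * ξ) ≤ dni (N * ξ) := by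
    by_contra! hcon
    exact h ⟨by omega, hcon⟩
  refine le_antisymm (psi_le_of_le (by omega) (by omega)) ?_
  obtain ⟨r, hr, hrN, hψ⟩ := exists_dni_eq_psi ξ (by omega : 1 ≤ N)
  rw [← hψ]
  rcases hrN.lt_or_eq with hlt | rfl
  · exact psi_le_dni hr (by omega)
  · exact (psi_le_dni hq (by omega)).trans hle

lemma exists_isBestApprox_dni_lt (ξ : ℝ) {ε : ℝ} (hε : 0 < ε) :
    ∃ Q : ℤ, IsBestApprox ξ Q ∧ dni (Q * ξ) < ε ∧ ∀ q : ℤ, 1 ≤ q → q < Q → ε ≤ dni (q * ξ) := by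
  obtain ⟨n, hn⟩ := exists_nat_gt (1 / ε)
  have hsmall : ∃ q : ℤ, 1 ≤ q ∧ dni (q * ξ) < ε := by
    obtain ⟨q, hq, -, hψ⟩ := exists_dni_eq_psi ξ (by omega : (1 : ℤ) ≤ n + 1)
    refine ⟨q, hq, hψ ▸ (psi_le_inv ξ (by omega)).trans_lt ?_⟩
    rw [div_lt_iff₀ (by positivity)]
    rw [div_lt_iff₀ hε] at hn
    push_cast
    nlinarith
  obtain ⟨Q, ⟨hQ, hQε⟩, hleast⟩ := Int.exists_least_of_bdd ⟨1, fun _ h => h.1⟩ hsmall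
  have hge : ∀ q : ℤ, 1 ≤ q → q < Q → ε ≤ dni (q * ξ) := fun q hq hqQ =>
    not_lt.1 fun hlt => (hleast q ⟨hq, hlt⟩).not_gt hqQ
  exact ⟨Q, ⟨hQ, fun q hq hqQ => hQε.trans_le (hge q hq hqQ)⟩, hQε, hge⟩

lemma exists_isBestApprox_gt (hξ : Irrational ξ) {B : ℤ} (hB : 1 ≤ B) :
    ∃ Q : ℤ, IsBestApprox ξ Q ∧ B < Q := by
  obtain ⟨Q, hQ, hlt, -⟩ := exists_isBestApprox_dni_lt ξ (psi_pos hξ hB)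
  exact ⟨Q, hQ, not_le.1 fun hQB => (psi_le_dni hQ.one_le hQB).not_gt hlt⟩

lemma IsBestApprox.exists_next (h : IsBestApprox ξ Q) (hξ : Irrational ξ) :
    ∃ Q' : ℤ, IsNextBestApprox ξ Q Q' := by
  obtain ⟨Q', hQ', hlt, hge⟩ :=
    exists_isBestApprox_dni_lt ξ (dni_intCast_mul_pos hξ (by linarith [h.one_le] : Q ≠ 0))
  have hQQ' : Q < Q' := by
    by_contra! hle
    rcases hle.lt_or_eq with hQ'Q | rfl
    · exact (h.dni_lt Q' hQ'.one_le hQ'Q).not_gt hlt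
    · exact hlt.false
  exact ⟨Q', h, hQ', hQQ', fun q hQq hqQ' => hge q (by linarith [h.one_le]) hqQ'⟩

namespace IsNextBestApprox

lemma dni_le (h : IsNextBestApprox ξ Q Q') {q : ℤ} (hq : 1 ≤ q) (hqQ' : q < Q') :
    dni (Q * ξ) ≤ dni (q * ξ) := by
  rcases lt_trichotomy q Q with hlt | rfl | hgt
  · exact (h.left.dni_lt q hq hlt).le
  · exact le_rfl
  · exact h.dni_le_of_lt_of_lt q hgt hqQ'

lemma not_isBestApprox (h : IsNextBestApprox ξ Q Q') {R : ℤ} (hQR : Q < R) (hRQ' : R < Q') :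
    ¬ IsBestApprox ξ R := fun hR =>
  (hR.dni_lt Q h.left.one_le hQR).not_ge (h.dni_le_of_lt_of_lt R hQR hRQ')

lemma le_of_isBestApprox (h : IsNextBestApprox ξ Q Q') {R : ℤ} (hR : IsBestApprox ξ R)
    (hQR : Q < R) : Q' ≤ R :=
  not_lt.1 fun hRQ' => h.not_isBestApprox hQR hRQ' hR

lemma psi_eq (h : IsNextBestApprox ξ Q Q') (hQN : Q ≤ N) (hNQ' : N < Q') :
    psi ξ N = dni (Q * ξ) := by
  obtain ⟨q, hq, hqN, hψ⟩ := exists_dni_eq_psi ξ (h.left.one_le.trans hQN)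
  exact le_antisymm (psi_le_dni h.left.one_le hQN) (hψ ▸ h.dni_le hq (hqN.trans_lt hNQ'))

lemma dni_le_inv (h : IsNextBestApprox ξ Q Q') : dni (Q * ξ) ≤ 1 / Q' := by
  have hQQ' := h.lt
  have hψ := psi_le_inv ξ (N := Q' - 1) (by linarith [h.left.one_le])
  rw [h.psi_eq (by omega) (by omega)] at hψ
  simpa using hψ

/-- Otherwise `Q' - Q < Q'` would approximate better than `Q`, with error `err ξ Q' - err ξ Q`. -/
lemma err_mul_err_neg (h : IsNextBestApprox ξ Q Q') (hξ : Irrational ξ) :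
    err ξ Q * err ξ Q' < 0 := by
  have hQ := h.left.one_le
  have hQQ' := h.lt
  have hne : err ξ Q' ≠ 0 := err_ne_zero hξ (by omega)
  have habs : |err ξ Q'| < |err ξ Q| := h.right.dni_lt Q hQ hQQ'
  have hdiff : |err ξ Q| ≤ |err ξ Q' - err ξ Q| :=
    calc |err ξ Q| = dni (Q * ξ) := rfl
      _ ≤ dni (((Q' - Q : ℤ) : ℝ) * ξ) := h.dni_le (by omega) (by omega)
      _ ≤ |((Q' - Q : ℤ) : ℝ) * ξ - ((round (Q' * ξ) - round (Q * ξ) : ℤ) : ℝ)| :=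
        round_le _ _
      _ = |err ξ Q' - err ξ Q| := by
        unfold err
        push_cast
        ring_nf
  by_contra! hnn
  rcases lt_or_gt_of_ne hne with hneg | hpos
  · have : err ξ Q ≤ 0 := by nlinarith
    rw [abs_of_neg hneg, abs_of_nonpos this] at habs
    rw [abs_of_nonpos this, abs_of_nonneg (by linarith)] at hdiff
    linarith
  · have : 0 ≤ err ξ Q := by nlinarith
    rw [abs_of_pos hpos, abs_of_nonneg this] at habs
    rw [abs_of_nonneg this, abs_of_nonpos (by linarith)] at hdiff
    linarith

lemma isUnit_det (h : IsNextBestApprox ξ Q Q') (hξ : Irrational ξ) : IsUnit (det ξ Q Q') := by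
  have hQ : (0 : ℝ) < Q := by exact_mod_cast h.left.one_le
  have hQQ' : (Q : ℝ) < Q' := by exact_mod_cast h.lt
  have halt := h.err_mul_err_neg hξ
  have habs : |err ξ Q'| < |err ξ Q| := h.right.dni_lt Q h.left.one_le h.lt
  have hQ'err : Q' * |err ξ Q| ≤ 1 := by
    have := h.dni_le_inv
    rw [le_div_iff₀ (by linarith), ← abs_err] at this
    linarith
  -- the two terms of `det = Q' err Q - Q err Q'` have the same sign
  have hdet : |(det ξ Q Q' : ℝ)| = Q' * |err ξ Q| + Q * |err ξ Q'| := by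
    rw [det_cast]
    rcases lt_or_gt_of_ne (err_ne_zero hξ (by linarith [h.left.one_le]) : err ξ Q ≠ 0)
      with hneg | hpos
    · have : 0 < err ξ Q' := by nlinarith
      rw [abs_of_neg hneg, abs_of_pos this, abs_of_neg (by nlinarith)]
      ring
    · have : err ξ Q' < 0 := by nlinarith
      rw [abs_of_pos hpos, abs_of_neg this, abs_of_pos (by nlinarith)]
      ring
  have hlt : |(det ξ Q Q' : ℝ)| < 2 := by
    rw [hdet]
    nlinarith [abs_nonneg (err ξ Q')]
  have hpos : 0 < |(det ξ Q Q' : ℝ)| := by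
    rw [hdet]
    have := abs_pos.2 (err_ne_zero hξ (by linarith [h.left.one_le]) : err ξ Q ≠ 0)
    nlinarith [abs_nonneg (err ξ Q')]
  have hlt' : |det ξ Q Q'| < 2 := by exact_mod_cast hlt
  have hpos' : 0 < |det ξ Q Q'| := by exact_mod_cast hpos
  exact Int.isUnit_iff_abs_eq.2 (by omega)

lemma exists_recurrence (h₁ : IsNextBestApprox ξ Q Q') (h₂ : IsNextBestApprox ξ Q' Q'')
    (hξ : Irrational ξ) :
    ∃ a : ℤ, 1 ≤ a ∧ Q'' = a * Q' + Q ∧ err ξ Q'' = a * err ξ Q' + err ξ Q ∧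
      dni (Q * ξ) = a * dni (Q' * ξ) + dni (Q'' * ξ) := by
  obtain ⟨a, b, hb, hQ'', herr⟩ :=
    exists_eq_add_mul_of_isUnit_det (h₁.isUnit_det hξ) (h₂.isUnit_det hξ)
  have hQ := h₁.left.one_le
  have hQQ' := h₁.lt
  have hQ'Q'' := h₂.lt
  have ha : 1 ≤ a := by rcases hb with rfl | rfl <;> nlinarith
  have haℝ : (1 : ℝ) ≤ a := by exact_mod_cast ha
  have hs₁ := h₁.err_mul_err_neg hξ
  have hs₂ := h₂.err_mul_err_neg hξ
  have hne : err ξ Q' ≠ 0 := err_ne_zero hξ (by omega)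
  obtain rfl : b = 1 := by
    refine hb.resolve_right fun hb => ?_
    subst hb
    have key : err ξ Q' * err ξ Q'' = a * (err ξ Q' * err ξ Q') - err ξ Q * err ξ Q' := by
      rw [herr]
      push_cast
      ring
    nlinarith [mul_self_pos.2 hne]
  push_cast at herr
  simp only [one_mul] at hQ'' herr
  refine ⟨a, ha, hQ'', herr, ?_⟩
  simp only [← abs_err]
  rcases lt_or_gt_of_ne hne with hneg | hpos
  · have h0 : 0 < err ξ Q := by nlinarith
    have h2 : 0 < err ξ Q'' := by nlinarith
    rw [abs_of_pos h0, abs_of_neg hneg, abs_of_pos h2]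
    linarith
  · have h0 : err ξ Q < 0 := by nlinarith
    have h2 : err ξ Q'' < 0 := by nlinarith
    rw [abs_of_neg h0, abs_of_pos hpos, abs_of_neg h2]
    linarith

lemma dni_add_dni_le (h₁ : IsNextBestApprox ξ Q Q') (h₂ : IsNextBestApprox ξ Q' Q'')
    (hξ : Irrational ξ) : dni (Q' * ξ) + dni (Q'' * ξ) ≤ dni (Q * ξ) := by
  obtain ⟨a, ha, -, -, hdni⟩ := h₁.exists_recurrence h₂ hξ
  have haℝ : (1 : ℝ) ≤ a := by exact_mod_cast ha
  nlinarith [dni_nonneg (Q' * ξ)]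

lemma isUnit_det_of_dni_lt_two_mul (h₁ : IsNextBestApprox ξ Q Q')
    (h₂ : IsNextBestApprox ξ Q' Q'') (hξ : Irrational ξ)
    (hlt : dni (Q * ξ) < 2 * dni (Q' * ξ)) : IsUnit (det ξ Q Q'') := by
  obtain ⟨a, ha, hQ'', herr, hdni⟩ := h₁.exists_recurrence h₂ hξ
  obtain rfl : a = 1 := by
    have hpos := dni_intCast_mul_pos hξ (by linarith [h₁.right.one_le] : Q' ≠ 0)
    have : (a : ℝ) < 2 := by nlinarith [dni_nonneg (Q'' * ξ)]
    have : a < 2 := by exact_mod_cast this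
    omega
  have : det ξ Q Q'' = det ξ Q Q' := by
    apply Int.cast_injective (α := ℝ)
    rw [det_cast, det_cast, herr, hQ'']
    push_cast
    ring
  exact this ▸ h₁.isUnit_det hξ

end IsNextBestApprox

def PsiRatioLt (c : ℝ) (N₀ : ℤ) (α β : ℝ) : Prop :=
  ∀ N : ℤ, N₀ ≤ N → psi α N < c * psi β N ∧ psi β N < c * psi α N

namespace PsiRatioLt

variable {c α β : ℝ} {N₀ : ℤ}

lemma symm (H : PsiRatioLt c N₀ α β) : PsiRatioLt c N₀ β α := fun N hN => (H N hN).symm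

lemma pos (H : PsiRatioLt c N₀ α β) : 0 < c := by
  by_contra! hc
  nlinarith [(H N₀ le_rfl).1, psi_nonneg α N₀, psi_nonneg β N₀]

lemma dni_lt_sq_mul (H : PsiRatioLt c N₀ α β) (hQ₀ : N₀ ≤ Q) (h : IsNextBestApprox α Q Q')
    (hβ : ¬ IsBestApprox β Q') : dni (Q * α) < c ^ 2 * dni (Q' * α) := by
  have hQQ' := h.lt
  have hQ := h.left.one_le
  have hc := H.pos
  calc dni (Q * α) = psi α (Q' - 1 : ℤ) := (h.psi_eq (by omega) (by omega)).symm
    _ < c * psi β (Q' - 1 : ℤ) := (H _ (by omega)).1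
    _ = c * psi β Q' := by rw [psi_eq_psi_sub_one hβ (by omega)]
    _ < c * (c * psi α Q') := by gcongr; exact (H Q' (by omega)).2
    _ = c ^ 2 * dni (Q' * α) := by rw [h.right.psi_eq]; ring

lemma isBestApprox_or_isBestApprox (H : PsiRatioLt c N₀ α β) (hc : c ^ 2 ≤ goldenRatio)
    (hα : Irrational α) (hQ₀ : N₀ ≤ Q) (h₁ : IsNextBestApprox α Q Q')
    (h₂ : IsNextBestApprox α Q' Q'') : IsBestApprox β Q' ∨ IsBestApprox β Q'' := by
  by_contra! hmiss
  have s₁ := H.dni_lt_sq_mul hQ₀ h₁ hmiss.1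
  have s₂ := H.dni_lt_sq_mul (hQ₀.trans h₁.lt.le) h₂ hmiss.2
  have hsum := h₁.dni_add_dni_le h₂ hα
  have hgold := mul_sub_one_le_one_of_le_goldenRatio (sq_nonneg c) hc
  have hpos := dni_intCast_mul_pos hα (by linarith [h₁.right.one_le] : Q' ≠ 0)
  have hc2 : 0 < c ^ 2 := pow_pos H.pos 2
  have h'' : dni (Q'' * α) < (c ^ 2 - 1) * dni (Q' * α) := by linarith
  -- `‖Q'α‖ < c² ‖Q''α‖ < c² (c² - 1) ‖Q'α‖ ≤ ‖Q'α‖`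
  nlinarith [mul_lt_mul_of_pos_left h'' hc2]

lemma exists_isBestApprox_isBestApprox_gt (H : PsiRatioLt c N₀ α β)
    (hc : c ^ 2 ≤ goldenRatio) (hα : Irrational α) {B : ℤ} (hB₀ : N₀ ≤ B) (hB : 1 ≤ B) :
    ∃ Q : ℤ, B < Q ∧ IsBestApprox α Q ∧ IsBestApprox β Q := by
  obtain ⟨Q, hQ, hBQ⟩ := exists_isBestApprox_gt hα hB
  obtain ⟨Q', h₁⟩ := hQ.exists_next hα
  obtain ⟨Q'', h₂⟩ := h₁.right.exists_next hα
  have := h₁.lt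
  have := h₂.lt
  rcases H.isBestApprox_or_isBestApprox hc hα (by omega) h₁ h₂ with hβ | hβ
  · exact ⟨Q', by omega, h₁.right, hβ⟩
  · exact ⟨Q'', by omega, h₂.right, hβ⟩

/-- Two consecutive misses being impossible, `R` is at most two steps after `Q`. -/
lemma isUnit_det (H : PsiRatioLt c N₀ α β) (hc : c ^ 2 ≤ goldenRatio) (hα : Irrational α)
    {Q R : ℤ} (hQ₀ : N₀ ≤ Q) (hQ : IsBestApprox α Q) (hR : IsBestApprox α R) (hQR : Q < R)
    (hmiss : ∀ q : ℤ, Q < q → q < R → IsBestApprox α q → ¬ IsBestApprox β q) :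
    IsUnit (det α Q R) := by
  obtain ⟨Q', h₁⟩ := hQ.exists_next hα
  rcases (h₁.le_of_isBestApprox hR hQR).lt_or_eq with hQ'R | rfl
  · obtain ⟨Q'', h₂⟩ := h₁.right.exists_next hα
    have hm₁ := hmiss Q' h₁.lt hQ'R h₁.right
    rcases (h₂.le_of_isBestApprox hR hQ'R).lt_or_eq with hQ''R | rfl
    · exact absurd ((H.isBestApprox_or_isBestApprox hc hα hQ₀ h₁ h₂).resolve_left hm₁)
        (hmiss Q'' (h₁.lt.trans h₂.lt) hQ''R h₂.right)
    · refine h₁.isUnit_det_of_dni_lt_two_mul h₂ hα ?_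
      have := H.dni_lt_sq_mul hQ₀ h₁ hm₁
      have := dni_intCast_mul_pos hα (by linarith [h₁.right.one_le] : Q' ≠ 0)
      nlinarith [goldenRatio_lt_two]
  · exact h₁.isUnit_det hα

lemma exists_gt_dni_sub_or_dni_add_le (H : PsiRatioLt c N₀ α β) (hc : c ^ 2 ≤ goldenRatio)
    (hα : Irrational α) (hβ : Irrational β) {B : ℤ} (hB₀ : N₀ ≤ B) (hB : 1 ≤ B) :
    ∃ Q : ℤ, B < Q ∧ (dni (α - β) ≤ 1 / Q ∨ dni (α + β) ≤ 1 / Q) := by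
  obtain ⟨Q, hBQ, hαQ, hβQ⟩ := H.exists_isBestApprox_isBestApprox_gt hc hα hB₀ hB
  obtain ⟨R, ⟨hQR, hαR, hβR⟩, hleast⟩ :=
    Int.exists_least_of_bdd (P := fun R => Q < R ∧ IsBestApprox α R ∧ IsBestApprox β R)
      ⟨Q, fun _ h => h.1.le⟩ (H.exists_isBestApprox_isBestApprox_gt hc hα (by omega) (by omega))
  have hmiss : ∀ q : ℤ, Q < q → q < R → IsBestApprox α q → ¬ IsBestApprox β q :=
    fun q hQq hqR hαq hβq => (hleast q ⟨hQq, hαq, hβq⟩).not_gt hqR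
  refine ⟨Q, hBQ, dni_sub_or_dni_add_le (R := R) (by omega) ?_ ?_⟩
  · exact H.isUnit_det hc hα (by omega) hαQ hαR hQR hmiss
  · exact H.symm.isUnit_det hc hβ (by omega) hβQ hβR hQR
      fun q hQq hqR hβq hαq => hmiss q hQq hqR hαq hβq

lemma exists_intCast_eq_sub_or_add (H : PsiRatioLt c N₀ α β) (hc : c ^ 2 ≤ goldenRatio)
    (hα : Irrational α) (hβ : Irrational β) : (∃ z : ℤ, α - β = z) ∨ ∃ z : ℤ, α + β = z := by
  by_contra! hne
  have hε : 0 < min (dni (α - β)) (dni (α + β)) := lt_min (dni_pos hne.1) (dni_pos hne.2)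
  obtain ⟨n, hn⟩ := exists_nat_gt (1 / min (dni (α - β)) (dni (α + β)))
  obtain ⟨Q, hQ, hle⟩ := H.exists_gt_dni_sub_or_dni_add_le hc hα hβ (B := max (max N₀ 1) n)
    (by omega) (by omega)
  have hnQ : (n : ℝ) < Q := by exact_mod_cast (le_max_right _ _).trans_lt hQ
  have hQε : 1 / (Q : ℝ) < min (dni (α - β)) (dni (α + β)) := by
    rw [div_lt_iff₀ hε] at hn
    rw [div_lt_iff₀ (by linarith [(n.cast_nonneg : (0 : ℝ) ≤ n)])]
    nlinarith
  rcases hle with h | h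
  · linarith [min_le_left (dni (α - β)) (dni (α + β))]
  · linarith [min_le_right (dni (α - β)) (dni (α + β))]

end PsiRatioLt

end BestApprox

open BestApprox in
/-- Satz 1: if α, β are irrational and α ± β ∉ ℤ, then for every T ≥ 1 there is
t ≥ T with |ψ_α(t) − ψ_β(t)| ≥ K·min(ψ_α(t), ψ_β(t)), K = √((√5+1)/2) − 1. -/
theorem satz1 (α β : ℝ) (hα : Irrational α) (hβ : Irrational β)
    (hsum : ∀ z : ℤ, α + β ≠ (z : ℝ)) (hdiff : ∀ z : ℤ, α - β ≠ (z : ℝ)) :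
    ∀ T : ℝ, 1 ≤ T → ∃ t : ℝ, T ≤ t ∧
      |psi α t - psi β t| ≥
        (Real.sqrt ((Real.sqrt 5 + 1) / 2) - 1) * min (psi α t) (psi β t) := by
  intro T _
  by_contra! hcon
  rw [show (√5 + 1) / 2 = goldenRatio by rw [goldenRatio, add_comm]] at hcon
  have H : PsiRatioLt (√goldenRatio) ⌈T⌉ α β := fun N hN =>
    lt_mul_and_lt_mul_of_abs_sub_lt (Real.one_le_sqrt.2 one_lt_goldenRatio.le)
      (hcon N (Int.ceil_le.1 hN))
  rcases H.exists_intCast_eq_sub_or_add (Real.sq_sqrt goldenRatio_pos.le).le hα hβ with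
    ⟨z, hz⟩ | ⟨z, hz⟩
  · exact hdiff z hz
  · exact hsum z hz
end

section
/- Corollary: Let α and β be irrational with α ± β ∉ ℤ. Then for every T ≥ 1 there exists t ≥ T such that |1/ψ_α(t) − 1/ψ_β(t)| ≥ K·t, with K = √((√5+1)/2) − 1. -/
lemma dni_le_abs_sub_intCast (x : ℝ) (z : ℤ) : dni x ≤ |x - z| := round_le x z

lemma dni_nonneg (x : ℝ) : 0 ≤ dni x := abs_nonneg _

lemma dni_le_half (x : ℝ) : dni x ≤ 1 / 2 := abs_sub_round x

lemma dni_intCast_mul_pos {ξ : ℝ} (hξ : Irrational ξ) {q : ℤ} (hq : q ≠ 0) :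
    0 < dni (q * ξ) :=
  abs_pos.mpr (sub_ne_zero.mpr ((hξ.intCast_mul hq).ne_int _))

lemma exists_dni_le_inv (ξ : ℝ) {n : ℕ} (hn : 0 < n) :
    ∃ q : ℤ, 1 ≤ q ∧ q ≤ n ∧ dni (q * ξ) ≤ 1 / (n + 1) := by
  obtain ⟨j, k, hk, hkn, h⟩ := Real.exists_int_int_abs_mul_sub_le ξ hn
  exact ⟨k, hk, hkn, (dni_le_abs_sub_intCast _ j).trans h⟩

lemma exists_dni_lt (ξ : ℝ) {ε : ℝ} (hε : 0 < ε) : ∃ q : ℤ, 1 ≤ q ∧ dni (q * ξ) < ε := by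
  obtain ⟨n, hn⟩ := exists_nat_gt (1 / ε)
  have hn0 : 0 < n := by exact_mod_cast (one_div_pos.mpr hε).trans hn
  obtain ⟨q, hq, -, hqε⟩ := exists_dni_le_inv ξ hn0
  refine ⟨q, hq, hqε.trans_lt ?_⟩
  rw [div_lt_iff₀ (by positivity)]
  rw [div_lt_iff₀ hε] at hn
  linarith

lemma exists_lt_dni_lt {ξ : ℝ} (hξ : Irrational ξ) {q : ℤ} (hq : 1 ≤ q) :
    ∃ m : ℤ, q < m ∧ dni (m * ξ) < dni (q * ξ) := by
  obtain ⟨k, hk, hkmin⟩ := (Finset.Icc 1 q).exists_min_image (fun m : ℤ => dni (m * ξ))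
    ⟨q, Finset.mem_Icc.mpr ⟨hq, le_rfl⟩⟩
  have hk1 : 1 ≤ k := (Finset.mem_Icc.mp hk).1
  obtain ⟨m, hm, hmk⟩ := exists_dni_lt ξ (dni_intCast_mul_pos hξ (by omega : k ≠ 0))
  have hqm : q < m := by
    by_contra! hmq
    exact (hkmin m (Finset.mem_Icc.mpr ⟨hm, hmq⟩)).not_gt hmk
  exact ⟨m, hqm, hmk.trans_le (hkmin q (Finset.mem_Icc.mpr ⟨hq, le_rfl⟩))⟩

def IsBestDen (ξ : ℝ) (q : ℤ) : Prop :=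
  1 ≤ q ∧ ∀ m : ℤ, 1 ≤ m → m < q → dni (q * ξ) < dni (m * ξ)

lemma isBestDen_one (ξ : ℝ) : IsBestDen ξ 1 := ⟨le_rfl, fun _ h1 h2 => absurd h1 (not_le.mpr h2)⟩

-- `sInf ∅ = 0` in `ℤ`; the set is nonempty for irrational `ξ` and `1 ≤ q` (`exists_lt_dni_lt`).
noncomputable def nextDen (ξ : ℝ) (q : ℤ) : ℤ :=
  sInf {m : ℤ | q < m ∧ dni (m * ξ) < dni (q * ξ)}

section nextDen

variable {ξ : ℝ} {q m : ℤ}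

lemma nextDen_mem (hξ : Irrational ξ) (hq : 1 ≤ q) :
    q < nextDen ξ q ∧ dni (nextDen ξ q * ξ) < dni (q * ξ) :=
  Int.csInf_mem (exists_lt_dni_lt hξ hq) ⟨q, fun _ hm => hm.1.le⟩

lemma lt_nextDen (hξ : Irrational ξ) (hq : 1 ≤ q) : q < nextDen ξ q := (nextDen_mem hξ hq).1

lemma dni_nextDen_lt (hξ : Irrational ξ) (hq : 1 ≤ q) :
    dni (nextDen ξ q * ξ) < dni (q * ξ) := (nextDen_mem hξ hq).2

lemma nextDen_le_of_dni_lt (hqm : q < m) (hm : dni (m * ξ) < dni (q * ξ)) : nextDen ξ q ≤ m :=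
  csInf_le ⟨q, fun _ hk => hk.1.le⟩ ⟨hqm, hm⟩

lemma IsBestDen.dni_le (hq : IsBestDen ξ q) (hm : 1 ≤ m) (hmq : m < nextDen ξ q) :
    dni (q * ξ) ≤ dni (m * ξ) := by
  rcases lt_trichotomy m q with h | rfl | h
  · exact (hq.2 m hm h).le
  · exact le_rfl
  · by_contra! h'
    exact (nextDen_le_of_dni_lt h h').not_gt hmq

lemma IsBestDen.next (hξ : Irrational ξ) (hq : IsBestDen ξ q) : IsBestDen ξ (nextDen ξ q) :=
  ⟨hq.1.trans (lt_nextDen hξ hq.1).le, fun _ hm hmq =>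
    (dni_nextDen_lt hξ hq.1).trans_le (hq.dni_le hm hmq)⟩

lemma IsBestDen.nextDen_le (hq : IsBestDen ξ q) (hm : IsBestDen ξ m) (hqm : q < m) :
    nextDen ξ q ≤ m :=
  nextDen_le_of_dni_lt hqm (hm.2 q hq.1 hqm)

lemma IsBestDen.psi_eq {t : ℝ} (hq : IsBestDen ξ q) (hqt : q ≤ t) (htq : t < nextDen ξ q) :
    psi ξ t = dni (q * ξ) := by
  have hlb : ∀ v ∈ {v : ℝ | ∃ m : ℤ, 1 ≤ m ∧ (m : ℝ) ≤ t ∧ v = dni ((m : ℝ) * ξ)},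
      dni (q * ξ) ≤ v := by
    rintro v ⟨m, hm, hmt, rfl⟩
    exact hq.dni_le hm (by exact_mod_cast hmt.trans_lt htq)
  have hmem : dni (q * ξ) ∈ {v : ℝ | ∃ m : ℤ, 1 ≤ m ∧ (m : ℝ) ≤ t ∧ v = dni ((m : ℝ) * ξ)} :=
    ⟨q, hq.1, hqt, rfl⟩
  exact le_antisymm (csInf_le ⟨_, hlb⟩ hmem) (le_csInf ⟨_, hmem⟩ hlb)

lemma le_nextDen_of_le (hξ : Irrational ξ) (hq : 1 ≤ q) {T : ℝ} (hT : T ≤ q) :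
    T ≤ nextDen ξ q :=
  hT.trans (by exact_mod_cast (lt_nextDen hξ hq).le)

lemma exists_isBestDen_le_lt_nextDen (hξ : Irrational ξ) {t : ℝ} (ht : 1 ≤ t) :
    ∃ q : ℤ, IsBestDen ξ q ∧ q ≤ t ∧ t < nextDen ξ q := by
  obtain ⟨q, ⟨hq, hqt⟩, hmax⟩ := Int.exists_greatest_of_bdd (P := fun z => IsBestDen ξ z ∧ z ≤ t)
    ⟨⌈t⌉, fun z hz => by exact_mod_cast hz.2.trans (Int.le_ceil t)⟩
    ⟨1, isBestDen_one ξ, by exact_mod_cast ht⟩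
  refine ⟨q, hq, hqt, lt_of_not_ge fun h => ?_⟩
  exact (hmax _ ⟨hq.next hξ, h⟩).not_gt (lt_nextDen hξ hq.1)

lemma exists_isBestDen_ge (hξ : Irrational ξ) (t : ℝ) : ∃ q : ℤ, IsBestDen ξ q ∧ t ≤ q := by
  obtain ⟨q, hq, -, hlt⟩ := exists_isBestDen_le_lt_nextDen hξ (le_max_right t 1)
  exact ⟨_, hq.next hξ, (le_max_left t 1).trans hlt.le⟩

lemma IsBestDen.exists_nextDen_eq (hξ : Irrational ξ) (hq : IsBestDen ξ q) (hq2 : 2 ≤ q) :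
    ∃ x : ℤ, IsBestDen ξ x ∧ nextDen ξ x = q := by
  obtain ⟨x, hx, hxq, hqx⟩ := exists_isBestDen_le_lt_nextDen hξ (t := ((q - 1 : ℤ) : ℝ))
    (by exact_mod_cast (by omega : 1 ≤ q - 1))
  have hxq : x ≤ q - 1 := by exact_mod_cast hxq
  have hqx : q - 1 < nextDen ξ x := by exact_mod_cast hqx
  exact ⟨x, hx, le_antisymm (hx.nextDen_le hq (by omega)) (by omega)⟩

lemma IsBestDen.nextDen_mul_dni_le_one (hξ : Irrational ξ) (hq : IsBestDen ξ q) :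
    nextDen ξ q * dni (q * ξ) ≤ 1 := by
  have hq' := lt_nextDen hξ hq.1
  have hq1 := hq.1
  obtain ⟨n, hn⟩ : ∃ n : ℕ, (n : ℤ) = nextDen ξ q - 1 := ⟨(nextDen ξ q - 1).toNat, by omega⟩
  obtain ⟨m, hm, hmn, hmd⟩ := exists_dni_le_inv ξ (n := n) (by omega)
  have hq'n : (nextDen ξ q : ℝ) = n + 1 := by rw [← Int.cast_natCast, hn]; push_cast; ring
  have hd := (hq.dni_le hm (by omega)).trans hmd
  rw [hq'n]
  rw [le_div_iff₀ (by positivity)] at hd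
  linarith

end nextDen

lemma isCoprime_of_isUnit_mul_sub_mul {R : Type*} [CommRing R] {a b c d : R}
    (h : IsUnit (a * b - c * d)) : IsCoprime a c ∧ IsCoprime a d := by
  obtain ⟨v, hv⟩ := h.exists_left_inv
  exact ⟨⟨v * b, -(v * d), by linear_combination hv⟩, ⟨v * b, -(v * c), by linear_combination hv⟩⟩

lemma abs_sub_lt_abs_of_mul_pos {α : Type*} [CommRing α] [LinearOrder α] [IsStrictOrderedRing α]
    {a b : α} (hab : 0 < a * b) (h : |b| < |a|) : |b - a| < |a| := by
  rw [← sq_lt_sq] at h ⊢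
  nlinarith

noncomputable def roundErr (ξ : ℝ) (q : ℤ) : ℝ := q * ξ - round (q * ξ)

lemma dni_intCast_mul (ξ : ℝ) (q : ℤ) : dni (q * ξ) = |roundErr ξ q| := rfl

noncomputable def crossDet (ξ : ℝ) (q : ℤ) : ℤ :=
  q * round (nextDen ξ q * ξ) - nextDen ξ q * round (q * ξ)

lemma crossDet_cast (ξ : ℝ) (q : ℤ) :
    (crossDet ξ q : ℝ) = nextDen ξ q * roundErr ξ q - q * roundErr ξ (nextDen ξ q) := by
  simp only [crossDet, roundErr]
  push_cast
  ring

section crossDet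

variable {ξ : ℝ} {q : ℤ}

lemma roundErr_ne_zero (hξ : Irrational ξ) (hq : 1 ≤ q) : roundErr ξ q ≠ 0 :=
  abs_pos.mp (dni_intCast_mul ξ q ▸ dni_intCast_mul_pos hξ (by omega))

/-- Otherwise `nextDen ξ q - q` would approximate `ξ` better than `q` while being smaller than
`nextDen ξ q`. -/
lemma IsBestDen.roundErr_mul_roundErr_nextDen_neg (hξ : Irrational ξ) (hq : IsBestDen ξ q) :
    roundErr ξ q * roundErr ξ (nextDen ξ q) < 0 := by
  have hq' := lt_nextDen hξ hq.1
  have hq1 := hq.1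
  refine lt_of_le_of_ne (not_lt.mp fun hpos => ?_)
    (mul_ne_zero (roundErr_ne_zero hξ hq1) (roundErr_ne_zero hξ (by omega)))
  have hdiff : dni (((nextDen ξ q - q : ℤ) : ℝ) * ξ) ≤
      |roundErr ξ (nextDen ξ q) - roundErr ξ q| := by
    convert dni_le_abs_sub_intCast _ (round (nextDen ξ q * ξ : ℝ) - round (q * ξ : ℝ)) using 2
    simp only [roundErr]
    push_cast
    ring
  have hlt : |roundErr ξ (nextDen ξ q)| < |roundErr ξ q| := by
    simpa only [dni_intCast_mul] using dni_nextDen_lt hξ hq1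
  have hle := hq.dni_le (m := nextDen ξ q - q) (by omega) (by omega)
  rw [dni_intCast_mul] at hle
  linarith [abs_sub_lt_abs_of_mul_pos hpos hlt]

lemma IsBestDen.abs_crossDet (hξ : Irrational ξ) (hq : IsBestDen ξ q) :
    |(crossDet ξ q : ℝ)| = nextDen ξ q * dni (q * ξ) + q * dni (nextDen ξ q * ξ) := by
  have hsign := hq.roundErr_mul_roundErr_nextDen_neg hξ
  have hq0 : (0 : ℝ) < q := by exact_mod_cast hq.1
  have hq'0 : (0 : ℝ) < nextDen ξ q := by exact_mod_cast hq.1.trans (lt_nextDen hξ hq.1).le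
  rw [crossDet_cast, dni_intCast_mul, dni_intCast_mul]
  rcases (roundErr_ne_zero hξ hq.1).lt_or_gt with h | h
  · have h' : 0 < roundErr ξ (nextDen ξ q) := by nlinarith
    rw [abs_of_neg h, abs_of_pos h', abs_of_neg (by nlinarith)]
    ring
  · have h' : roundErr ξ (nextDen ξ q) < 0 := by nlinarith
    rw [abs_of_pos h, abs_of_neg h', abs_of_pos (by nlinarith)]
    ring

/-- Its absolute value `q' ‖qξ‖ + q ‖q'ξ‖` is positive and, as `q ‖q'ξ‖ < q' ‖qξ‖ ≤ 1`, less
than `2`. -/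
lemma IsBestDen.isUnit_crossDet (hξ : Irrational ξ) (hq : IsBestDen ξ q) :
    IsUnit (crossDet ξ q) := by
  have habs := hq.abs_crossDet hξ
  have hq0 : (0 : ℝ) < q := by exact_mod_cast hq.1
  have hlt : (q : ℝ) < nextDen ξ q := by exact_mod_cast lt_nextDen hξ hq.1
  have hd := dni_intCast_mul_pos hξ (q := q) (by have := hq.1; omega)
  have hd' := dni_nextDen_lt hξ hq.1
  have hd'0 := dni_nonneg ((nextDen ξ q : ℝ) * ξ)
  have hone := hq.nextDen_mul_dni_le_one hξ
  have hpos : (0 : ℝ) < |(crossDet ξ q : ℝ)| := by rw [habs]; nlinarith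
  have htwo : |(crossDet ξ q : ℝ)| < 2 := by rw [habs]; nlinarith
  rw [← Int.cast_abs] at hpos htwo
  have : |crossDet ξ q| = 1 := by
    have h1 : 0 < |crossDet ξ q| := by exact_mod_cast hpos
    have h2 : |crossDet ξ q| < 2 := by exact_mod_cast htwo
    omega
  exact Int.isUnit_iff_abs_eq.mpr this

lemma IsBestDen.crossDet_mul_roundErr_pos (hξ : Irrational ξ) (hq : IsBestDen ξ q) :
    0 < crossDet ξ q * roundErr ξ q := by
  have hsign := hq.roundErr_mul_roundErr_nextDen_neg hξ
  have hq0 : (0 : ℝ) < q := by exact_mod_cast hq.1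
  have hq'0 : (0 : ℝ) < nextDen ξ q := by exact_mod_cast hq.1.trans (lt_nextDen hξ hq.1).le
  have he := roundErr_ne_zero hξ hq.1
  rw [crossDet_cast]
  nlinarith [sq_pos_of_ne_zero he]

lemma IsBestDen.crossDet_nextDen (hξ : Irrational ξ) (hq : IsBestDen ξ q) :
    crossDet ξ (nextDen ξ q) = -crossDet ξ q := by
  have h₁ := hq.crossDet_mul_roundErr_pos hξ
  have h₂ := (hq.next hξ).crossDet_mul_roundErr_pos hξ
  have hsign := hq.roundErr_mul_roundErr_nextDen_neg hξ
  have hprod : crossDet ξ q * crossDet ξ (nextDen ξ q) < 0 := by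
    by_contra! h
    have h' : (0 : ℝ) ≤ crossDet ξ q * crossDet ξ (nextDen ξ q) := by exact_mod_cast h
    nlinarith [mul_nonneg h' (mul_pos h₁ h₂).le]
  rcases Int.isUnit_iff.mp (hq.isUnit_crossDet hξ) with h | h <;>
  rcases Int.isUnit_iff.mp ((hq.next hξ).isUnit_crossDet hξ) with h' | h' <;>
  rw [h, h'] at hprod ⊢ <;> omega

lemma IsBestDen.dvd_nextDen_nextDen_sub (hξ : Irrational ξ) (hq : IsBestDen ξ q) :
    nextDen ξ q ∣ nextDen ξ (nextDen ξ q) - q := by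
  have halt := hq.crossDet_nextDen hξ
  have hcop := (isCoprime_of_isUnit_mul_sub_mul ((hq.next hξ).isUnit_crossDet hξ)).2
  unfold crossDet at halt
  refine hcop.dvd_of_dvd_mul_right ⟨round (nextDen ξ (nextDen ξ q) * ξ : ℝ) - round (q * ξ : ℝ), ?_⟩
  linear_combination -halt

end crossDet

section recurrence

variable {ξ : ℝ} {x : ℤ}

/-- The continued-fraction recurrences `q_{k+1} = a q_k + q_{k-1}` and
`‖q_{k-1}ξ‖ = a ‖q_kξ‖ + ‖q_{k+1}ξ‖`: the determinants alternate, so `q_k ∣ q_{k+1} - q_{k-1}`, and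
the errors at `q_{k-1}` and `q_{k+1}` have the same sign, opposite to that at `q_k`. -/
lemma IsBestDen.exists_nextDen_nextDen_eq (hξ : Irrational ξ) (hx : IsBestDen ξ x) :
    ∃ d : ℤ, 1 ≤ d ∧ nextDen ξ (nextDen ξ x) = d * nextDen ξ x + x ∧
      dni (x * ξ) = d * dni (nextDen ξ x * ξ) + dni (nextDen ξ (nextDen ξ x) * ξ) := by
  have hq := hx.next hξ
  obtain ⟨d, hd⟩ := hx.dvd_nextDen_nextDen_sub hξ
  set q := nextDen ξ x
  set y := nextDen ξ q
  have hx1 := hx.1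
  have hxq : x < q := lt_nextDen hξ hx.1
  have hqy : q < y := lt_nextDen hξ hq.1
  have hd1 : 1 ≤ d := by
    by_contra! h
    nlinarith
  have hround : round (y * ξ : ℝ) - round (x * ξ : ℝ) = d * round (q * ξ : ℝ) := by
    have halt := hx.crossDet_nextDen hξ
    unfold crossDet at halt
    refine mul_left_cancel₀ (by omega : q ≠ 0) ?_
    linear_combination halt + round (q * ξ : ℝ) * hd
  have herr : roundErr ξ y = roundErr ξ x + d * roundErr ξ q := by
    have hy : (y : ℝ) = x + q * d := by exact_mod_cast (by linarith : y = x + q * d)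
    have hr : ((round (y * ξ : ℝ) : ℤ) : ℝ) = round (x * ξ : ℝ) + d * round (q * ξ : ℝ) := by
      exact_mod_cast (by linarith : round (y * ξ : ℝ) = round (x * ξ : ℝ) + d * round (q * ξ : ℝ))
    rw [roundErr, roundErr, roundErr, hr, hy]
    ring
  have hxq_sign := hx.roundErr_mul_roundErr_nextDen_neg hξ
  have hqy_sign := hq.roundErr_mul_roundErr_nextDen_neg hξ
  have hd0 : (0 : ℝ) < d := by exact_mod_cast hd1
  refine ⟨d, hd1, by linarith, ?_⟩
  simp only [dni_intCast_mul]
  rcases (roundErr_ne_zero hξ hq.1).lt_or_gt with h | h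
  · have hx' : 0 < roundErr ξ x := by nlinarith
    have hy' : 0 < roundErr ξ y := by nlinarith
    rw [abs_of_neg h, abs_of_pos hx', abs_of_pos hy', herr]
    ring
  · have hx' : roundErr ξ x < 0 := by nlinarith
    have hy' : roundErr ξ y < 0 := by nlinarith
    rw [abs_of_pos h, abs_of_neg hx', abs_of_neg hy', herr]
    ring

lemma IsBestDen.nextDen_add_le (hξ : Irrational ξ) (hx : IsBestDen ξ x) :
    nextDen ξ x + x ≤ nextDen ξ (nextDen ξ x) := by
  obtain ⟨d, hd, heq, -⟩ := hx.exists_nextDen_nextDen_eq hξ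
  nlinarith [hx.1, lt_nextDen hξ hx.1]

lemma IsBestDen.dni_nextDen_add_le (hξ : Irrational ξ) (hx : IsBestDen ξ x) :
    dni (nextDen ξ x * ξ) + dni (nextDen ξ (nextDen ξ x) * ξ) ≤ dni (x * ξ) := by
  obtain ⟨d, hd, -, heq⟩ := hx.exists_nextDen_nextDen_eq hξ
  have hd' : (1 : ℝ) ≤ d := by exact_mod_cast hd
  nlinarith [dni_nonneg (nextDen ξ x * ξ)]

end recurrence

section psi

variable {ξ t : ℝ}

lemma exists_psi_eq (hξ : Irrational ξ) (ht : 1 ≤ t) :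
    ∃ q : ℤ, IsBestDen ξ q ∧ t < nextDen ξ q ∧ psi ξ t = dni (q * ξ) := by
  obtain ⟨q, hq, hqt, htq⟩ := exists_isBestDen_le_lt_nextDen hξ ht
  exact ⟨q, hq, htq, hq.psi_eq hqt htq⟩

lemma psi_pos (hξ : Irrational ξ) (ht : 1 ≤ t) : 0 < psi ξ t := by
  obtain ⟨q, hq, -, hψ⟩ := exists_psi_eq hξ ht
  exact hψ ▸ dni_intCast_mul_pos hξ (by have := hq.1; omega)

lemma mul_psi_le_one (hξ : Irrational ξ) (ht : 1 ≤ t) : t * psi ξ t ≤ 1 := by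
  obtain ⟨q, hq, htq, hψ⟩ := exists_psi_eq hξ ht
  rw [hψ]
  nlinarith [hq.nextDen_mul_dni_le_one hξ, dni_nonneg (q * ξ)]

end psi

structure PsiRatioBounded (ξ η c T : ℝ) : Prop where
  irrational_left : Irrational ξ
  irrational_right : Irrational η
  pos : 0 < c
  sq_mul_sq_le : c ^ 2 * c ^ 2 ≤ c ^ 2 + 1
  psi_left_lt : ∀ t, T ≤ t → psi ξ t < c * psi η t
  psi_right_lt : ∀ t, T ≤ t → psi η t < c * psi ξ t

namespace PsiRatioBounded

variable {ξ η c T : ℝ} {w x y : ℤ}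

lemma symm (h : PsiRatioBounded ξ η c T) : PsiRatioBounded η ξ c T :=
  ⟨h.irrational_right, h.irrational_left, h.pos, h.sq_mul_sq_le, h.psi_right_lt, h.psi_left_lt⟩

lemma sq_le_two (h : PsiRatioBounded ξ η c T) : c ^ 2 ≤ 2 := by
  nlinarith [h.sq_mul_sq_le]

/-- At a jump of `ψ_ξ` where `ψ_η` stays constant, the two comparisons `ψ_ξ < c ψ_η` just before
and `ψ_η < c ψ_ξ` at the jump bound its size by `c²`. -/
lemma dni_lt_sq_mul (h : PsiRatioBounded ξ η c T) (hx : IsBestDen ξ x)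
    (hq : ¬IsBestDen η (nextDen ξ x)) (hT : T ≤ x) :
    dni (x * ξ) < c ^ 2 * dni (nextDen ξ x * ξ) := by
  have hξ := h.irrational_left
  have hxq := lt_nextDen hξ hx.1
  have hq1 : (1 : ℝ) ≤ nextDen ξ x := by exact_mod_cast hx.1.trans hxq.le
  obtain ⟨b, hb, hbq, hqb⟩ := exists_isBestDen_le_lt_nextDen h.irrational_right hq1
  have hbq' : (b : ℝ) ≤ nextDen ξ x - 1 := by
    have hbq : b ≤ nextDen ξ x := by exact_mod_cast hbq
    have hne : b ≠ nextDen ξ x := fun hbq => hq (hbq ▸ hb)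
    exact_mod_cast (by omega : b ≤ nextDen ξ x - 1)
  have hxq' : (x : ℝ) ≤ nextDen ξ x - 1 := by exact_mod_cast (by omega : x ≤ nextDen ξ x - 1)
  have hbefore := h.psi_left_lt (nextDen ξ x - 1 / 2) (by linarith)
  rw [hx.psi_eq (by linarith) (by linarith), hb.psi_eq (by linarith) (by linarith)] at hbefore
  have hafter := h.psi_right_lt (nextDen ξ x) (by linarith)
  rw [hb.psi_eq hbq hqb, (hx.next hξ).psi_eq le_rfl
    (by exact_mod_cast lt_nextDen hξ (hx.next hξ).1)] at hafter
  nlinarith [h.pos]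

lemma nextDen_nextDen_eq_add (h : PsiRatioBounded ξ η c T) (hx : IsBestDen ξ x)
    (hq : ¬IsBestDen η (nextDen ξ x)) (hT : T ≤ x) :
    nextDen ξ (nextDen ξ x) = nextDen ξ x + x := by
  obtain ⟨d, hd, heq, hdni⟩ := hx.exists_nextDen_nextDen_eq h.irrational_left
  obtain rfl | hd2 := hd.eq_or_lt
  · rw [heq, one_mul]
  have hjump := h.dni_lt_sq_mul hx hq hT
  have hd2' : (2 : ℝ) ≤ d := by exact_mod_cast hd2
  have hq0 := dni_nonneg (nextDen ξ x * ξ)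
  have : c ^ 2 * dni (nextDen ξ x * ξ) ≤ 2 * dni (nextDen ξ x * ξ) :=
    mul_le_mul_of_nonneg_right h.sq_le_two hq0
  nlinarith [dni_nonneg (nextDen ξ (nextDen ξ x) * ξ)]

/-- Two consecutive jumps of `ψ_ξ` at which `ψ_η` stays constant would shrink `‖q ξ‖` by more
than `c⁴ ≤ c² + 1` allows, because `‖q_k ξ‖ + ‖q_{k+1} ξ‖ ≤ ‖q_{k-1} ξ‖`. -/
lemma isBestDen_nextDen_or (h : PsiRatioBounded ξ η c T) (hw : IsBestDen ξ w) (hT : T ≤ w) :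
    IsBestDen η (nextDen ξ w) ∨ IsBestDen η (nextDen ξ (nextDen ξ w)) := by
  have hξ := h.irrational_left
  by_contra! hn
  have hx := hw.next hξ
  have h₁ := h.dni_lt_sq_mul hw hn.1 hT
  have h₂ := h.dni_lt_sq_mul hx hn.2 (le_nextDen_of_le hξ hw.1 hT)
  have hsum := hw.dni_nextDen_add_le hξ
  have hpos := dni_intCast_mul_pos hξ (q := nextDen ξ (nextDen ξ w))
    (by have := (hx.next hξ).1; omega)
  have hu := dni_nonneg (nextDen ξ w * ξ)
  have hbound : (c ^ 2 - 1) * dni (nextDen ξ w * ξ) ≤ dni (nextDen ξ (nextDen ξ w) * ξ) := by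
    rcases le_or_gt (c ^ 2) 1 with hc | hc
    · nlinarith
    · calc (c ^ 2 - 1) * dni (nextDen ξ w * ξ)
          ≤ (c ^ 2 - 1) * (c ^ 2 * dni (nextDen ξ (nextDen ξ w) * ξ)) := by gcongr
        _ = (c ^ 2 * c ^ 2 - c ^ 2) * dni (nextDen ξ (nextDen ξ w) * ξ) := by ring
        _ ≤ dni (nextDen ξ (nextDen ξ w) * ξ) := by nlinarith [h.sq_mul_sq_le]
  linarith

lemma nextDen_right_eq_add (h : PsiRatioBounded ξ η c T) (hyξ : IsBestDen ξ y)
    (hyη : IsBestDen η y) (hT : T ≤ y) (hlt : nextDen ξ y < nextDen η y) :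
    nextDen η y = nextDen ξ y + y := by
  have hξ := h.irrational_left
  have ha_next := h.isBestDen_nextDen_or hyξ hT
  have ha_add := fun hn => h.nextDen_nextDen_eq_add hyξ hn hT
  have hb_next := h.symm.isBestDen_nextDen_or hyη hT
  have hb_add := fun hn => h.symm.nextDen_nextDen_eq_add hyη hn hT
  have hy1 := hyξ.1
  have hya := lt_nextDen hξ hyξ.1
  have ha := hyξ.next hξ
  have hb_min : ∀ m, IsBestDen η m → y < m → nextDen η y ≤ m := fun _ hm => hyη.nextDen_le hm
  generalize nextDen ξ y = a at *
  generalize nextDen η y = b at *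
  have ha_not : ¬IsBestDen η a := fun ha' => (hb_min a ha' hya).not_gt hlt
  have haa := ha_add ha_not
  have hb_le : b ≤ a + y := haa ▸ hb_min _ (ha_next.resolve_left ha_not) (by omega)
  refine hb_le.eq_or_lt.resolve_right fun hb_lt => ?_
  have hb_not : ¬IsBestDen ξ b := fun hb' => by
    have := ha.nextDen_le hb' hlt
    omega
  have hbb := hb_add hb_not
  have h₁ := (ha.next hξ).nextDen_le (hb_next.resolve_left hb_not) (by omega)
  have h₂ := (ha.next hξ).nextDen_add_le hξ
  have h₃ := ha.nextDen_add_le hξ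
  omega

/-- Modulo `y = nextDen ξ x`, the numbers `x` and `w` are congruent to the successors of `y` for `ξ`
and for `η`, which are equal or differ by `y` (`nextDen_right_eq_add`). -/
lemma eq_of_nextDen_eq (h : PsiRatioBounded ξ η c T) (hx : IsBestDen ξ x) (hw : IsBestDen η w)
    (hxw : nextDen ξ x = nextDen η w) (hT : T ≤ nextDen ξ x) : x = w := by
  have hξ := h.irrational_left
  have hη := h.irrational_right
  have hyξ := hx.next hξ
  have hyη := hw.next hη
  have hdx := hx.dvd_nextDen_nextDen_sub hξ
  have hdw := hw.dvd_nextDen_nextDen_sub hη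
  have hx' := lt_nextDen hξ hx.1
  have hw' := lt_nextDen hη hw.1
  rw [← hxw] at hyη hdw hw'
  have hsucc : nextDen ξ x ∣ nextDen η (nextDen ξ x) - nextDen ξ (nextDen ξ x) := by
    rcases lt_trichotomy (nextDen ξ (nextDen ξ x)) (nextDen η (nextDen ξ x)) with hlt | heq | hgt
    · simp [h.nextDen_right_eq_add hyξ hyη hT hlt]
    · simp [heq]
    · simp [h.symm.nextDen_right_eq_add hyη hyξ hT hgt]
  have hdiff : nextDen ξ x ∣ w - x := by
    have := dvd_add (dvd_sub hsucc hdw) hdx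
    rwa [show nextDen η (nextDen ξ x) - nextDen ξ (nextDen ξ x) - (nextDen η (nextDen ξ x) - w) +
      (nextDen ξ (nextDen ξ x) - x) = w - x by ring] at this
  have hx1 := hx.1
  have hw1 := hw.1
  have := Int.eq_zero_of_abs_lt_dvd hdiff (abs_sub_lt_iff.mpr ⟨by omega, by omega⟩)
  omega

lemma isBestDen_nextDen (h : PsiRatioBounded ξ η c T) (hx : IsBestDen ξ x) (hT : T ≤ x) :
    IsBestDen η (nextDen ξ x) := by
  have hξ := h.irrational_left
  have hq := hx.next hξ
  by_contra hn
  have hy := (h.isBestDen_nextDen_or hx hT).resolve_left hn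
  have hy2 : 2 ≤ nextDen ξ (nextDen ξ x) := by
    have := hx.1
    have := lt_nextDen hξ hx.1
    have := lt_nextDen hξ hq.1
    omega
  obtain ⟨z, hz, hzy⟩ := hy.exists_nextDen_eq h.irrational_right hy2
  have hTy := le_nextDen_of_le hξ hq.1 (le_nextDen_of_le hξ hx.1 hT)
  exact hn (h.eq_of_nextDen_eq hq hz hzy.symm hTy ▸ hz)

lemma nextDen_right_eq (h : PsiRatioBounded ξ η c T) (hyξ : IsBestDen ξ y) (hyη : IsBestDen η y)
    (hT : T ≤ y) : nextDen η y = nextDen ξ y :=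
  le_antisymm (hyη.nextDen_le (h.isBestDen_nextDen hyξ hT) (lt_nextDen h.irrational_left hyξ.1))
    (hyξ.nextDen_le (h.symm.isBestDen_nextDen hyη hT) (lt_nextDen h.irrational_right hyη.1))

end PsiRatioBounded

/-- The ratios `s n / Q n` all agree and approximate `γ` within `1 / Q n → 0`, so
`γ = s 0 / Q 0 = s 1 / Q 1`, an integer because `Q 0` and `Q 1` are coprime. -/
lemma exists_int_eq_of_mul_eq_mul {γ : ℝ} {Q s : ℕ → ℤ} (hQ : ∀ n : ℕ, (n : ℤ) < Q n)
    (hcross : ∀ n, Q n * s (n + 1) = Q (n + 1) * s n) (hcop : IsCoprime (Q 0) (Q 1))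
    (hbound : ∀ n, |Q n * γ - s n| ≤ 1) : ∃ z : ℤ, γ = z := by
  set E : ℕ → ℝ := fun n => Q n * γ - s n
  have hQpos : ∀ n, (0 : ℝ) < Q n := fun n => by
    exact_mod_cast (Int.natCast_nonneg n).trans_lt (hQ n)
  have hstep : ∀ n, (Q n : ℝ) * E (n + 1) = Q (n + 1) * E n := fun n => by
    have : (Q n : ℝ) * s (n + 1) = Q (n + 1) * s n := by exact_mod_cast hcross n
    simp only [E]
    linear_combination -this
  have hinv : ∀ n, (Q n : ℝ) * E 0 = Q 0 * E n := by
    intro n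
    induction n with
    | zero => ring
    | succ n ih =>
      refine mul_left_cancel₀ (hQpos n).ne' ?_
      linear_combination (Q (n + 1) : ℝ) * ih - (Q 0 : ℝ) * hstep n
  have hE0 : E 0 = 0 := by
    by_contra hne
    obtain ⟨n, hn⟩ := exists_nat_gt ((Q 0 : ℝ) / |E 0|)
    have hQn : (n : ℝ) < Q n := by exact_mod_cast hQ n
    have h1 : (Q n : ℝ) * |E 0| ≤ Q 0 := by
      rw [← abs_of_pos (hQpos n), ← abs_mul, hinv n, abs_mul, abs_of_pos (hQpos 0)]
      simpa using mul_le_mul_of_nonneg_left (hbound n) (hQpos 0).le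
    rw [div_lt_iff₀ (abs_pos.mpr hne)] at hn
    nlinarith [abs_pos.mpr hne]
  have hE1 : E 1 = 0 := by
    have := hinv 1
    rw [hE0, mul_zero] at this
    exact (mul_eq_zero.mp this.symm).resolve_left (hQpos 0).ne'
  obtain ⟨u, v, huv⟩ := hcop
  refine ⟨u * s 0 + v * s 1, ?_⟩
  have huv' : (u : ℝ) * Q 0 + v * Q 1 = 1 := by exact_mod_cast huv
  simp only [E, sub_eq_zero] at hE0 hE1
  push_cast
  rw [← hE0, ← hE1]
  linear_combination -γ * huv'

/-- Along a chain of common best denominators the determinants `crossDet` of `ξ` and of `η` both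
alternate in sign, so their product is a constant `σ = ±1`; then `γ = ξ - σ η` and the integers
`round (q ξ) - σ round (q η)` satisfy the hypotheses of `exists_int_eq_of_mul_eq_mul`. -/
lemma exists_int_add_or_sub_of_common_chain {ξ η : ℝ} (hξ : Irrational ξ) (hη : Irrational η)
    {Q : ℕ → ℤ} (hbestξ : ∀ n, IsBestDen ξ (Q n)) (hbestη : ∀ n, IsBestDen η (Q n))
    (hnextξ : ∀ n, Q (n + 1) = nextDen ξ (Q n)) (hnextη : ∀ n, Q (n + 1) = nextDen η (Q n)) :
    ∃ z : ℤ, ξ + η = z ∨ ξ - η = z := by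
  have hQ : ∀ n : ℕ, (n : ℤ) < Q n := fun n => by
    induction n with
    | zero => exact (hbestξ 0).1
    | succ n ih =>
      have := hnextξ n ▸ lt_nextDen hξ (hbestξ n).1
      push_cast
      omega
  set σ := crossDet ξ (Q 0) * crossDet η (Q 0)
  have hσ : ∀ n, crossDet ξ (Q n) * crossDet η (Q n) = σ := fun n => by
    induction n with
    | zero => rfl
    | succ n ih =>
      have hξn : crossDet ξ (Q (n + 1)) = -crossDet ξ (Q n) := by
        rw [hnextξ n]
        exact (hbestξ n).crossDet_nextDen hξ
      have hηn : crossDet η (Q (n + 1)) = -crossDet η (Q n) := by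
        rw [hnextη n]
        exact (hbestη n).crossDet_nextDen hη
      rw [hξn, hηn, neg_mul_neg, ih]
  have hdetξ : ∀ n, crossDet ξ (Q n) =
      Q n * round (Q (n + 1) * ξ : ℝ) - Q (n + 1) * round (Q n * ξ : ℝ) :=
    fun n => by rw [crossDet, ← hnextξ]
  have hdetη : ∀ n, crossDet η (Q n) =
      Q n * round (Q (n + 1) * η : ℝ) - Q (n + 1) * round (Q n * η : ℝ) :=
    fun n => by rw [crossDet, ← hnextη]
  have hσunit : IsUnit σ := ((hbestξ 0).isUnit_crossDet hξ).mul ((hbestη 0).isUnit_crossDet hη)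
  obtain ⟨z, hz⟩ := exists_int_eq_of_mul_eq_mul (γ := ξ - σ * η)
    (s := fun n => round (Q n * ξ : ℝ) - σ * round (Q n * η : ℝ)) hQ
    (fun n => by
      have hunit := Int.isUnit_mul_self ((hbestη n).isUnit_crossDet hη)
      linear_combination -hdetξ n + σ * hdetη n + crossDet η (Q n) * hσ n
        - crossDet ξ (Q n) * hunit)
    (hnextξ 0 ▸ (isCoprime_of_isUnit_mul_sub_mul ((hbestξ 0).isUnit_crossDet hξ)).1)
    (fun n => by
      have hξn := dni_le_half ((Q n : ℝ) * ξ)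
      have hηn := dni_le_half ((Q n : ℝ) * η)
      rw [dni_intCast_mul] at hξn hηn
      calc |(Q n : ℝ) * (ξ - σ * η) - ((round (Q n * ξ : ℝ) - σ * round (Q n * η : ℝ) : ℤ) : ℝ)|
          = |roundErr ξ (Q n) - σ * roundErr η (Q n)| := by
            congr 1
            simp only [roundErr]
            push_cast
            ring
        _ ≤ |roundErr ξ (Q n)| + |(σ : ℝ)| * |roundErr η (Q n)| := by
            rw [← abs_mul]
            exact abs_sub _ _
        _ ≤ 1 := by
            rw [← Int.cast_abs, Int.isUnit_iff_abs_eq.mp hσunit, Int.cast_one, one_mul]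
            linarith)
  rcases Int.isUnit_iff.mp hσunit with hσ1 | hσ1
  · exact ⟨z, Or.inr (by simpa [hσ1] using hz)⟩
  · exact ⟨z, Or.inl (by simpa [hσ1] using hz)⟩

lemma PsiRatioBounded.exists_int_add_or_sub {ξ η c T : ℝ} (h : PsiRatioBounded ξ η c T) :
    ∃ z : ℤ, ξ + η = z ∨ ξ - η = z := by
  have hξ := h.irrational_left
  obtain ⟨s, hs, hTs⟩ := exists_isBestDen_ge hξ T
  set Q : ℕ → ℤ := fun n => (nextDen ξ)^[n + 1] s
  have hnextξ : ∀ n, Q (n + 1) = nextDen ξ (Q n) := fun n =>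
    Function.iterate_succ_apply' (nextDen ξ) (n + 1) s
  have hQ : ∀ n, IsBestDen ξ (Q n) ∧ T ≤ Q n := fun n => by
    induction n with
    | zero => exact ⟨hs.next hξ, le_nextDen_of_le hξ hs.1 hTs⟩
    | succ n ih => exact hnextξ n ▸ ⟨ih.1.next hξ, le_nextDen_of_le hξ ih.1.1 ih.2⟩
  have hQη : ∀ n, IsBestDen η (Q n) := fun n => by
    cases n with
    | zero => exact h.isBestDen_nextDen hs hTs
    | succ n => exact hnextξ n ▸ h.isBestDen_nextDen (hQ n).1 (hQ n).2
  refine exists_int_add_or_sub_of_common_chain hξ h.irrational_right (fun n => (hQ n).1) hQη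
    hnextξ fun n => ?_
  rw [hnextξ n, h.nextDen_right_eq (hQ n).1 (hQη n) (hQ n).2]

lemma lt_mul_of_abs_one_div_sub_lt {a b c t : ℝ} (ha : 0 < a) (hb : 0 < b) (hc : 1 ≤ c)
    (hbt : t * b ≤ 1) (h : |1 / a - 1 / b| < (c - 1) * t) : b < c * a := by
  have h₁ : 1 / a - 1 / b < (c - 1) * t := (abs_lt.mp h).2
  have h₂ : (c - 1) * t ≤ (c - 1) / b := by
    rw [le_div_iff₀ hb]
    nlinarith
  have h₃ : 1 / a < c / b := by linarith [show (c - 1) / b = c / b - 1 / b by ring]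
  rwa [div_lt_div_iff₀ ha hb, one_mul] at h₃

lemma psiRatioBounded_of_abs_sub_lt {ξ η c T : ℝ} (hξ : Irrational ξ) (hη : Irrational η)
    (hc : 1 ≤ c) (hc4 : c ^ 2 * c ^ 2 ≤ c ^ 2 + 1) (hT : 1 ≤ T)
    (h : ∀ t, T ≤ t → |1 / psi ξ t - 1 / psi η t| < (c - 1) * t) :
    PsiRatioBounded ξ η c T where
  irrational_left := hξ
  irrational_right := hη
  pos := zero_lt_one.trans_le hc
  sq_mul_sq_le := hc4
  psi_left_lt t ht := lt_mul_of_abs_one_div_sub_lt (psi_pos hη (hT.trans ht))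
    (psi_pos hξ (hT.trans ht)) hc (mul_psi_le_one hξ (hT.trans ht))
    (by rw [abs_sub_comm]; exact h t ht)
  psi_right_lt t ht := lt_mul_of_abs_one_div_sub_lt (psi_pos hξ (hT.trans ht))
    (psi_pos hη (hT.trans ht)) hc (mul_psi_le_one hη (hT.trans ht)) (h t ht)

/-- Folgerung: under the same hypotheses, |1/ψ_α(t) − 1/ψ_β(t)| ≥ K·t for some t ≥ T. -/
theorem folgerung (α β : ℝ) (hα : Irrational α) (hβ : Irrational β)
    (hsum : ∀ z : ℤ, α + β ≠ (z : ℝ)) (hdiff : ∀ z : ℤ, α - β ≠ (z : ℝ)) :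
    ∀ T : ℝ, 1 ≤ T → ∃ t : ℝ, T ≤ t ∧
      |1 / psi α t - 1 / psi β t| ≥ (Real.sqrt ((Real.sqrt 5 + 1) / 2) - 1) * t := by
  intro T hT
  by_contra! hgap
  have hsq : Real.sqrt ((Real.sqrt 5 + 1) / 2) ^ 2 = Real.goldenRatio := by
    rw [Real.sq_sqrt (by positivity), add_comm]
  have hc : 1 ≤ Real.sqrt ((Real.sqrt 5 + 1) / 2) := by
    rw [Real.one_le_sqrt, add_comm]
    exact Real.one_lt_goldenRatio.le
  obtain ⟨z, hz | hz⟩ := (psiRatioBounded_of_abs_sub_lt hα hβ hc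
    (by rw [hsq, ← sq, Real.goldenRatio_sq]) hT hgap).exists_int_add_or_sub
  exacts [hsum z hz, hdiff z hz]
end

section
/- Optimality: for every ε > 0 there exist irrational numbers α, β with α ± β ∉ ℤ such that for all sufficiently large t, |ψ_α(t) − ψ_β(t)| ≤ (K + ε) · min(ψ_α(t), ψ_β(t)), where K = √((√5+1)/2) − 1. In particular, K in the main theorem cannot be replaced by any larger constant. -/
/-!
Take `α = 1/φ = [0; 1, 1, …]` and `β = 1/(M + φ) = [0; M + 1, 1, 1, …]`. For such numbers the
best approximations are the convergents `fib n / q_n`, so `ψ_β(t) = 1/(φ^n (M + φ))` for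
`q_n ≤ t < q_{n+1}`, while `√5 q_n = φ^n (M + φ) (1 + O(φ^(-2n)))`. Hence, up to a factor
`1 + o(1)`, `1/ψ_α(t)` and `1/ψ_β(t)` are the terms of the progressions `φ^ℕ` and `(M + φ) φ^ℕ`
just below `√5 t`. Choosing `M + φ` within a factor `1 + δ` of `√φ φ^k` makes the two
progressions interleave with ratio `√φ`, so `ψ_α(t) / ψ_β(t)` lies in `[1/√φ, (1 + δ) √φ]` for
large `t`.
-/

open Real goldenRatio Filter

theorem abs_le_abs_add_of_mul_nonneg {a b : ℝ} (h : 0 ≤ a * b) : |a| ≤ |a + b| :=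
  sq_le_sq.1 (by nlinarith [sq_nonneg b])

/-- Best approximation property of consecutive convergents `b / a`, `d / c`. -/
theorem abs_sub_le_abs_sub_of_isUnit {ξ : ℝ} {a b c d q p : ℤ} (hdet : IsUnit (a * d - b * c))
    (ha : 0 ≤ a) (hsign : (a * ξ - b) * (c * ξ - d) ≤ 0) (hq : 0 < q) (hqc : q < c) :
    |a * ξ - b| ≤ |q * ξ - p| := by
  -- Unimodularity gives integers `x, y` with `(q, p) = x (a, b) + y (c, d)`; `0 < q < c` forces
  -- `x ≠ 0` and `x y ≤ 0`, so the two error terms `x (a ξ - b)` and `y (c ξ - d)` share a sign.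
  set e := a * d - b * c
  have he : e * e = 1 := Int.isUnit_mul_self hdet
  set x := e * (q * d - p * c)
  set y := e * (p * a - q * b)
  have hq_eq : x * a + y * c = q := by linear_combination q * he
  have hp_eq : x * b + y * d = p := by linear_combination p * he
  have hx : x ≠ 0 := by
    rintro hx
    rw [hx, zero_mul, zero_add] at hq_eq
    rcases le_or_gt y 0 with hy | hy <;> nlinarith
  have hxy : x * y ≤ 0 := by
    by_contra! hxy
    rcases pos_and_pos_or_neg_and_neg_of_mul_pos hxy with ⟨hx, hy⟩ | ⟨hx, hy⟩ <;> nlinarith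
  have hsplit : (q : ℝ) * ξ - p = x * (a * ξ - b) + y * (c * ξ - d) := by
    rw [← hq_eq, ← hp_eq]; push_cast; ring
  have hxyR : (x : ℝ) * y ≤ 0 := by exact_mod_cast hxy
  calc |a * ξ - b| ≤ |(x : ℝ)| * |a * ξ - b| :=
        le_mul_of_one_le_left (abs_nonneg _) (by exact_mod_cast Int.one_le_abs hx)
    _ = |x * (a * ξ - b)| := (abs_mul _ _).symm
    _ ≤ |x * (a * ξ - b) + y * (c * ξ - d)| := by
        apply abs_le_abs_add_of_mul_nonneg
        nlinarith [mul_nonneg_of_nonpos_of_nonpos hxyR hsign]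
    _ = |q * ξ - p| := by rw [hsplit]

theorem psi_eq_abs_sub {ξ t : ℝ} {a b : ℤ} (ha : 1 ≤ a) (hat : (a : ℝ) ≤ t)
    (hbest : ∀ q p : ℤ, 1 ≤ q → (q : ℝ) ≤ t → |a * ξ - b| ≤ |q * ξ - p|) :
    psi ξ t = |a * ξ - b| := by
  have hround : dni (a * ξ) = |a * ξ - b| :=
    le_antisymm (round_le _ b) (hbest a (round (a * ξ)) ha hat)
  refine IsLeast.csInf_eq ⟨⟨a, ha, hat, hround.symm⟩, ?_⟩
  rintro v ⟨q, hq, hqt, rfl⟩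
  exact hbest q _ hq hqt

theorem exists_le_lt_succ_of_tendsto {α : Type*} [LinearOrder α] [NoMaxOrder α] {f : ℕ → α}
    (hf : Tendsto f atTop atTop) {n₀ : ℕ} {t : α} (ht : f n₀ ≤ t) :
    ∃ n, n₀ ≤ n ∧ f n ≤ t ∧ t < f (n + 1) := by
  by_contra! h
  have hle : ∀ n, n₀ ≤ n → f n ≤ t := fun n hn ↦ Nat.le_induction ht (fun k hk ↦ h k hk) n hn
  obtain ⟨n, hnt, hn⟩ := ((hf.eventually_gt_atTop t).and (eventually_ge_atTop n₀)).exists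
  exact (hle n hn).not_gt hnt

theorem fib_add_one_sq_sub_fib_mul_fib_add_two (n : ℕ) :
    (Nat.fib (n + 1) : ℤ) ^ 2 - Nat.fib n * Nat.fib (n + 2) = (-1) ^ n := by
  have h : (Nat.fib (n + 1) : ℝ) ^ 2 - Nat.fib n * Nat.fib (n + 2) = (-1) ^ n := by
    rw [Nat.fib_add_two, ← goldenRatio_mul_goldenConj, mul_pow, Nat.cast_add,
      ← fib_succ_sub_goldenRatio_mul_fib, ← fib_succ_sub_goldenConj_mul_fib]
    linear_combination (Nat.fib n * Nat.fib (n + 1) : ℝ) * goldenRatio_add_goldenConj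
      - (Nat.fib n : ℝ) ^ 2 * goldenRatio_mul_goldenConj
  exact_mod_cast h

theorem abs_goldenConj : |ψ| = φ⁻¹ := by
  rw [abs_of_neg goldenConj_neg, inv_goldenRatio]

theorem goldenConj_sq_lt_one : ψ ^ 2 < 1 := by
  rw [goldenConj_sq]; linarith [goldenConj_neg]

/-- `goldenTail M = [0; M + 1, 1, 1, …]`; its convergents are `fib n / goldenTailDen M n`. -/
noncomputable def goldenTail (M : ℕ) : ℝ := (M + φ)⁻¹

def goldenTailDen (M n : ℕ) : ℕ := M * Nat.fib n + Nat.fib (n + 1)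

section GoldenTail

variable (M : ℕ)

theorem goldenTailDen_mul_sub_fib (n : ℕ) :
    (goldenTailDen M n : ℝ) * goldenTail M - Nat.fib n = ψ ^ n / (M + φ) := by
  rw [goldenTail, goldenTailDen, ← fib_succ_sub_goldenRatio_mul_fib]
  push_cast
  field_simp
  ring

theorem isUnit_goldenTailDen_det (n : ℕ) :
    IsUnit ((goldenTailDen M n : ℤ) * Nat.fib (n + 1) - Nat.fib n * goldenTailDen M (n + 1)) := by
  have h : (goldenTailDen M n : ℤ) * Nat.fib (n + 1) - Nat.fib n * goldenTailDen M (n + 1) =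
      (Nat.fib (n + 1) : ℤ) ^ 2 - Nat.fib n * Nat.fib (n + 2) := by
    simp only [goldenTailDen]; push_cast; ring
  rw [h, fib_add_one_sq_sub_fib_mul_fib_add_two]
  exact isUnit_neg_one.pow n

theorem tendsto_goldenTailDen : Tendsto (fun n ↦ (goldenTailDen M n : ℝ)) atTop atTop := by
  refine tendsto_natCast_atTop_atTop.comp (tendsto_atTop_mono (fun n ↦ ?_) tendsto_id)
  have := Nat.le_fib_add_one (n + 1)
  have : Nat.fib (n + 1) ≤ goldenTailDen M n := Nat.le_add_left _ _
  simp only [id]; omega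

theorem sqrt_five_mul_goldenTailDen (n : ℕ) :
    √5 * goldenTailDen M n = φ ^ n * (M + φ) - ψ ^ n * (M + ψ) := by
  simp only [goldenTailDen]
  push_cast
  rw [coe_fib_eq, coe_fib_eq]
  field_simp
  ring

theorem abs_sqrt_five_mul_goldenTailDen_sub_le (n : ℕ) :
    |√5 * goldenTailDen M n - φ ^ n * (M + φ)| ≤ (ψ ^ 2) ^ n * (φ ^ n * (M + φ)) := by
  rw [sqrt_five_mul_goldenTailDen, sub_sub_cancel_left, abs_neg, abs_mul, abs_pow, abs_goldenConj]
  have hpow : (ψ ^ 2) ^ n * φ ^ n = φ⁻¹ ^ n := by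
    rw [← mul_pow, sq, mul_assoc, goldenConj_mul_goldenRatio, inv_goldenRatio, mul_neg_one]
  have hM₀ : (0 : ℝ) ≤ M := M.cast_nonneg
  have hM : |(M : ℝ) + ψ| ≤ M + φ :=
    abs_le.2 ⟨by linarith [goldenRatio_add_goldenConj],
      by linarith [goldenConj_neg, goldenRatio_pos]⟩
  rw [← mul_assoc, hpow]
  exact mul_le_mul_of_nonneg_left hM (by positivity)

theorem one_le_goldenTailDen (n : ℕ) : 1 ≤ goldenTailDen M n :=
  Nat.le_add_left_of_le (Nat.fib_pos.2 n.succ_pos)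

theorem psi_goldenTail {n : ℕ} {t : ℝ} (hnt : (goldenTailDen M n : ℝ) ≤ t)
    (htn : t < goldenTailDen M (n + 1)) : psi (goldenTail M) t = (φ ^ n * (M + φ))⁻¹ := by
  have herr := goldenTailDen_mul_sub_fib M
  have hbest : ∀ q p : ℤ, 1 ≤ q → (q : ℝ) ≤ t →
      |((goldenTailDen M n : ℤ) : ℝ) * goldenTail M - ((Nat.fib n : ℤ) : ℝ)| ≤
        |q * goldenTail M - p| := by
    intro q p hq hqt
    refine abs_sub_le_abs_sub_of_isUnit (isUnit_goldenTailDen_det M n) (Int.natCast_nonneg _)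
      ?_ hq (by exact_mod_cast hqt.trans_lt htn)
    push_cast
    rw [herr, herr, pow_succ]
    have : ψ ^ n / (M + φ) * (ψ ^ n * ψ / (M + φ)) = (ψ ^ n / (M + φ)) ^ 2 * ψ := by ring
    exact this ▸ mul_nonpos_of_nonneg_of_nonpos (sq_nonneg _) goldenConj_neg.le
  rw [psi_eq_abs_sub (by exact_mod_cast one_le_goldenTailDen M n) (by exact_mod_cast hnt) hbest]
  push_cast
  rw [herr, abs_div, abs_pow, abs_goldenConj, abs_of_pos (by positivity), inv_pow, mul_inv,
    div_eq_mul_inv]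

theorem exists_psi_goldenTail_eq {n₀ : ℕ} {η t : ℝ} (hη : (ψ ^ 2) ^ n₀ ≤ η)
    (ht : (goldenTailDen M n₀ : ℝ) ≤ t) :
    ∃ n, psi (goldenTail M) t = (φ ^ n * (M + φ))⁻¹ ∧
      (1 - η) * (φ ^ n * (M + φ)) ≤ √5 * t ∧ √5 * t < φ * (1 + η) * (φ ^ n * (M + φ)) := by
  obtain ⟨n, hn, hnt, htn⟩ := exists_le_lt_succ_of_tendsto (tendsto_goldenTailDen M) ht
  have hηn : ∀ j, n₀ ≤ j → (ψ ^ 2) ^ j ≤ η := fun j hj ↦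
    (pow_le_pow_of_le_one (sq_nonneg ψ) goldenConj_sq_lt_one.le hj).trans hη
  have h5 : 0 < √5 := by positivity
  refine ⟨n, psi_goldenTail M hnt htn, ?_, ?_⟩
  · have hlo := (abs_le.1 (abs_sqrt_five_mul_goldenTailDen_sub_le M n)).1
    have := mul_le_mul_of_nonneg_right (hηn n hn) (by positivity : 0 ≤ φ ^ n * (M + φ))
    have := mul_le_mul_of_nonneg_left hnt h5.le
    linarith
  · have hhi := (abs_le.1 (abs_sqrt_five_mul_goldenTailDen_sub_le M (n + 1))).2
    rw [show φ ^ (n + 1) * (M + φ) = φ * (φ ^ n * (M + φ)) by ring] at hhi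
    have := mul_le_mul_of_nonneg_right (hηn (n + 1) (by omega))
      (by positivity : 0 ≤ φ * (φ ^ n * (M + φ)))
    have := mul_lt_mul_of_pos_left htn h5
    linarith

end GoldenTail

/-- With `s = √b` and `l ≈ s * b ^ k`, the progressions `b ^ ℕ` and `l * b ^ ℕ` interleave with
ratio `s`: two of their terms within a factor `b * c` of each other are within a factor
`s * (1 + δ)`. -/
theorem geom_interleave {b s c δ l : ℝ} {i j k : ℕ} (hb : 1 < b) (hs : s ^ 2 = b) (hs₀ : 0 < s)
    (hc : 0 < c) (hcδ : c * (1 + δ) < s) (hl : s * b ^ k ≤ l) (hl' : l ≤ (1 + δ) * (s * b ^ k))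
    (hA : b ^ (i + 1) < b * c * (b ^ j * l)) (hB : b ^ j * l < b * c * b ^ (i + 1)) :
    b ^ (i + 1) ≤ s * (b ^ j * l) ∧ b ^ j * l ≤ s * (1 + δ) * b ^ (i + 1) := by
  have hb₀ : 0 < b := zero_lt_one.trans hb
  have hbj := pow_pos hb₀ j
  have hbk := pow_pos hb₀ k
  have hδ : 0 ≤ δ := le_of_mul_le_mul_right (a := s * b ^ k) (by linarith) (by positivity)
  have hijk : i + 1 ≤ j + k + 1 := by
    suffices b ^ (i + 1) < b ^ (j + k + 2) by
      have := (pow_lt_pow_iff_right₀ hb).1 this; omega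
    calc b ^ (i + 1) < b * c * (b ^ j * l) := hA
      _ ≤ b * c * (b ^ j * ((1 + δ) * (s * b ^ k))) := by gcongr
      _ = (c * (1 + δ)) * s * (b * b ^ j * b ^ k) := by ring
      _ < s * s * (b * b ^ j * b ^ k) := by gcongr
      _ = b ^ (j + k + 2) := by rw [← sq, hs]; ring
  have hjki : j + k ≤ i + 1 := by
    suffices b ^ (j + k) < b ^ (i + 2) by
      have := (pow_lt_pow_iff_right₀ hb).1 this; omega
    have hcs : c < s := by nlinarith
    have : s * b ^ (j + k) < s * b ^ (i + 2) := by
      calc s * b ^ (j + k) = b ^ j * (s * b ^ k) := by ring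
        _ ≤ b ^ j * l := by gcongr
        _ < b * c * b ^ (i + 1) := hB
        _ = c * b ^ (i + 2) := by ring
        _ < s * b ^ (i + 2) := by gcongr
    exact lt_of_mul_lt_mul_left this hs₀.le
  constructor
  · calc b ^ (i + 1) ≤ b ^ (j + k + 1) := pow_le_pow_right₀ hb.le hijk
      _ = s * (b ^ j * (s * b ^ k)) := by rw [pow_succ, ← hs]; ring
      _ ≤ s * (b ^ j * l) := by gcongr
  · calc b ^ j * l ≤ b ^ j * ((1 + δ) * (s * b ^ k)) := by gcongr
      _ = s * (1 + δ) * b ^ (j + k) := by ring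
      _ ≤ s * (1 + δ) * b ^ (i + 1) := by gcongr; exact hb.le

theorem abs_sub_le_mul_min {a b r : ℝ} (hab : a ≤ r * b) (hba : b ≤ r * a) :
    |a - b| ≤ (r - 1) * min a b := by
  rcases le_total a b with h | h
  · rw [abs_of_nonpos (sub_nonpos.2 h), min_eq_left h]; linarith
  · rw [abs_of_nonneg (sub_nonneg.2 h), min_eq_right h]; linarith

theorem abs_inv_sub_inv_le_mul_min {A B r : ℝ} (hA : 0 < A) (hB : 0 < B) (hAB : A ≤ r * B)
    (hBA : B ≤ r * A) : |A⁻¹ - B⁻¹| ≤ (r - 1) * min A⁻¹ B⁻¹ := by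
  have key : ∀ {X Y : ℝ}, 0 < X → 0 < Y → Y ≤ r * X → X⁻¹ ≤ r * Y⁻¹ := fun hX hY h ↦ by
    rw [← div_eq_mul_inv, le_div_iff₀ hY, inv_mul_le_iff₀ hX, mul_comm]; exact h
  exact abs_sub_le_mul_min (key hA hB hBA) (key hB hA hAB)

theorem exists_nat_add_goldenRatio_mem_Icc {s δ : ℝ} (hs : 1 ≤ s) (hδ : 0 < δ) (hδ₁ : δ ≤ 1 / 10) :
    ∃ M k : ℕ, 2 ≤ M ∧ s * φ ^ k ≤ M + φ ∧ M + φ ≤ (1 + δ) * (s * φ ^ k) := by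
  obtain ⟨k, hk⟩ := pow_unbounded_of_one_lt (1 / δ) one_lt_goldenRatio
  have hkδ : 1 < φ ^ k * δ := (div_lt_iff₀ hδ).1 hk
  have hK : φ ^ k ≤ s * φ ^ k := le_mul_of_one_le_left (by positivity) hs
  have hKφ : φ + 1 < s * φ ^ k := by nlinarith [goldenRatio_lt_two]
  refine ⟨⌈s * φ ^ k - φ⌉₊, k, Nat.lt_ceil.2 (by push_cast; linarith), ?_, ?_⟩
  · linarith [Nat.le_ceil (s * φ ^ k - φ)]
  · nlinarith [Nat.ceil_lt_add_one (by linarith : 0 ≤ s * φ ^ k - φ)]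

theorem eq_zero_of_intCast_add_mul_goldenRatio_eq_zero {a b : ℤ} (h : (a : ℝ) + b * φ = 0) :
    a = 0 ∧ b = 0 := by
  have hb : b = 0 := by
    by_contra hb
    exact (goldenRatio_irrational.intCast_mul hb).ne_int (-a) (by push_cast; linarith)
  subst hb
  exact ⟨by simpa using h, rfl⟩

theorem irrational_goldenTail (M : ℕ) : Irrational (goldenTail M) :=
  (goldenRatio_irrational.natCast_add M).inv

theorem goldenTail_zero : goldenTail 0 = φ - 1 := by
  rw [goldenTail, Nat.cast_zero, zero_add, inv_goldenRatio]; linarith [one_sub_goldenRatio]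

theorem goldenTail_zero_add_goldenTail_ne_intCast {M : ℕ} (hM : 2 ≤ M) (z : ℤ) :
    goldenTail 0 + goldenTail M ≠ z := by
  intro h
  rw [goldenTail_zero, goldenTail] at h
  have hI : ((M : ℝ) + φ) * (M + φ)⁻¹ = 1 := mul_inv_cancel₀ (by positivity)
  have key : ((2 - M - z * M : ℤ) : ℝ) + ((M - z : ℤ) : ℝ) * φ = 0 := by
    push_cast; linear_combination ((M : ℝ) + φ) * h - goldenRatio_sq - hI
  obtain ⟨h₁, h₂⟩ := eq_zero_of_intCast_add_mul_goldenRatio_eq_zero key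
  obtain rfl : z = M := by omega
  nlinarith

theorem goldenTail_zero_sub_goldenTail_ne_intCast {M : ℕ} (hM : 1 ≤ M) (z : ℤ) :
    goldenTail 0 - goldenTail M ≠ z := by
  intro h
  rw [goldenTail_zero, goldenTail] at h
  have hI : ((M : ℝ) + φ) * (M + φ)⁻¹ = 1 := mul_inv_cancel₀ (by positivity)
  have key : ((- M - z * M : ℤ) : ℝ) + ((M - z : ℤ) : ℝ) * φ = 0 := by
    push_cast; linear_combination ((M : ℝ) + φ) * h - goldenRatio_sq + hI
  obtain ⟨h₁, h₂⟩ := eq_zero_of_intCast_add_mul_goldenRatio_eq_zero key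
  obtain rfl : z = M := by omega
  nlinarith

theorem sqrt_goldenRatio_bounds : 6 / 5 < √φ ∧ √φ < 2 := by
  have h : (3 : ℝ) / 2 < φ := by nlinarith [goldenRatio_sq, goldenRatio_pos]
  constructor
  · rw [Real.lt_sqrt (by norm_num)]; linarith
  · rw [Real.sqrt_lt' (by norm_num)]; linarith [goldenRatio_lt_two]

/-- Satz 2 (optimality): K cannot be replaced by any larger constant. -/
theorem satz2 :
    ∀ ε : ℝ, 0 < ε → ∃ α β : ℝ, Irrational α ∧ Irrational β ∧
      (∀ z : ℤ, α + β ≠ (z : ℝ)) ∧ (∀ z : ℤ, α - β ≠ (z : ℝ)) ∧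
      ∃ T : ℝ, ∀ t : ℝ, T ≤ t →
        |psi α t - psi β t| ≤
          (Real.sqrt ((Real.sqrt 5 + 1) / 2) - 1 + ε) * min (psi α t) (psi β t) := by
  intro ε hε
  rw [show (√5 + 1) / 2 = φ by rw [goldenRatio, add_comm]]
  set s := √φ
  have hs : s ^ 2 = φ := sq_sqrt goldenRatio_pos.le
  obtain ⟨hs₁, hs₂⟩ := sqrt_goldenRatio_bounds
  set δ := min (ε / 2) (1 / 10)
  have hδ : 0 < δ := by positivity
  have hδ₁ : δ ≤ 1 / 10 := min_le_right _ _
  obtain ⟨M, k, hM, hMlo, hMhi⟩ :=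
    exists_nat_add_goldenRatio_mem_Icc (s := s) (by linarith) hδ hδ₁
  obtain ⟨n₀, hn₀⟩ := exists_pow_lt_of_lt_one (by norm_num : (0 : ℝ) < 1 / 50)
    goldenConj_sq_lt_one
  refine ⟨goldenTail 0, goldenTail M, irrational_goldenTail 0, irrational_goldenTail M,
    goldenTail_zero_add_goldenTail_ne_intCast hM,
    goldenTail_zero_sub_goldenTail_ne_intCast (by omega),
    max (goldenTailDen 0 n₀) (goldenTailDen M n₀), fun t ht ↦ ?_⟩
  obtain ⟨n, hψα, hα₁, hα₂⟩ := exists_psi_goldenTail_eq 0 hn₀.le (le_of_max_le_left ht)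
  obtain ⟨m, hψβ, hβ₁, hβ₂⟩ := exists_psi_goldenTail_eq M hn₀.le (le_of_max_le_right ht)
  rw [Nat.cast_zero, zero_add, ← pow_succ] at hψα hα₁ hα₂
  -- `51 / 49 = (1 + η) / (1 - η)` for the error `η = 1 / 50` of `exists_psi_goldenTail_eq`
  obtain ⟨hAB, hBA⟩ := geom_interleave (c := 51 / 49) (i := n) (j := m) one_lt_goldenRatio hs
    (by positivity) (by norm_num) (by nlinarith) hMlo hMhi (by linarith) (by linarith)
  rw [hψα, hψβ, show s - 1 + ε = s + ε - 1 by ring]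
  have hsδ : s * (1 + δ) ≤ s + ε := by nlinarith [min_le_left (ε / 2) (1 / 10)]
  refine abs_inv_sub_inv_le_mul_min (by positivity) (by positivity) ?_ ?_
  · exact hAB.trans (by gcongr; linarith)
  · exact hBA.trans (by gcongr)
end
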